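/- arXiv:2601.18439 — 3 statements merged into one kernel-verified Lean document; each statement's English description precedes it below -/
import Mathlib

section
/- Let F be a subcubic forest with m connected components and let Z be a subset of the vertices of F, all of degree at most 2 in F. Then F contains at least ⌈(|Z| − m)/2⌉ pairwise vertex-disjoint Z-paths. -/
open Finset

section ForestHelpers
open SimpleGraph

variable {V : Type*}

variable {V : Type*}

/-- An internal vertex of a path has two distinct neighbors on the path. -/
lemma internal_two_nbrs {G : SimpleGraph V} :
    ∀ {x y : V} (p : G.Walk x y), p.IsPath → ∀ {z : V}, z ∈ p.support → z ≠ x → z ≠ y →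
      ∃ a b, a ≠ b ∧ G.Adj z a ∧ G.Adj z b ∧ a ∈ p.support ∧ b ∈ p.support
  | x, _, .nil, _hp, z, hz, hzx, _hzy => by
    simp only [Walk.support_nil, List.mem_singleton] at hz
    exact absurd hz hzx
  | x, y, .cons (v := w) h q, hp, z, hz, hzx, hzy => by
    rw [Walk.support_cons, List.mem_cons] at hz
    rcases hz with rfl | hz
    · exact absurd rfl hzx
    · by_cases hzw : z = w
      · subst hzw
        -- q : Walk z y, z ≠ y so q is a cons
        cases q with
        | nil => exact absurd rfl hzy
        | cons h2 q2 =>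
          refine ⟨x, _, ?_, h.symm, h2, by simp, by simp⟩
          intro hxw2
          have hnd := hp.support_nodup
          rw [Walk.support_cons] at hnd
          have : x ∈ (Walk.cons h2 q2).support := by
            rw [hxw2]; simpa using Or.inr q2.start_mem_support
          exact (List.nodup_cons.mp hnd).1 this
      · obtain ⟨a, b, hab, ha, hb, has, hbs⟩ :=
          internal_two_nbrs q hp.of_cons hz hzw hzy
        exact ⟨a, b, hab, ha, hb, by simp [has], by simp [hbs]⟩



lemma two_le_degree_of_nbrs [Fintype V] {G : SimpleGraph V} [DecidableRel G.Adj]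
    {z a b : V} (hab : a ≠ b) (ha : G.Adj z a) (hb : G.Adj z b) : 2 ≤ G.degree z := by
  have : 1 < (G.neighborFinset z).card :=
    Finset.one_lt_card.mpr ⟨a, by simpa using ha, b, by simpa using hb, hab⟩
  exact this

lemma three_le_degree_of_nbrs [Fintype V] [DecidableEq V] {G : SimpleGraph V} [DecidableRel G.Adj]
    {z a b c : V} (hab : a ≠ b) (hac : a ≠ c) (hbc : b ≠ c)
    (ha : G.Adj z a) (hb : G.Adj z b) (hc : G.Adj z c) : 3 ≤ G.degree z := by
  have hsub : ({a, b, c} : Finset V) ⊆ G.neighborFinset z := by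
    intro x hx
    simp only [Finset.mem_insert, Finset.mem_singleton] at hx
    rcases hx with rfl | rfl | rfl <;> simpa
  have hcard : ({a, b, c} : Finset V).card = 3 := by
    rw [Finset.card_insert_of_notMem (by simp [hab, hac]),
      Finset.card_insert_of_notMem (by simp [hbc]), Finset.card_singleton]
  calc 3 = ({a, b, c} : Finset V).card := hcard.symm
    _ ≤ (G.neighborFinset z).card := Finset.card_le_card hsub
    _ = G.degree z := rfl

/-- A walk avoiding the removed vertices transfers to the comap graph. -/
lemma reach_comap {G : SimpleGraph V} {P : V → Prop} :
    ∀ {x y : V} (p : G.Walk x y), (∀ z ∈ p.support, P z) →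
      ∀ (hx : P x) (hy : P y),
        (G.comap (Subtype.val : Subtype P → V)).Reachable ⟨x, hx⟩ ⟨y, hy⟩
  | x, _, .nil, _, hx, hy => by rfl
  | x, y, .cons (v := w) h q, hs, hx, hy => by
    have hw : P w := hs w (by simp)
    have h1 : (G.comap (Subtype.val : Subtype P → V)).Adj ⟨x, hx⟩ ⟨w, hw⟩ := h
    exact h1.reachable.trans
      (reach_comap q (fun z hz => hs z (by simp [hz])) hw hy)



lemma exists_degree_le_one [Fintype V] [Nonempty V] (G : SimpleGraph V) [DecidableRel G.Adj]
    (hG : G.IsAcyclic) : ∃ v, G.degree v ≤ 1 := by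
  classical
  by_contra hcon
  push_neg at hcon
  -- longest path
  set S : ℕ → Prop := fun n => ∃ (x : V) (y : V) (p : G.Walk x y), p.IsPath ∧ p.length = n with hS
  have h0 : S 0 := ⟨Classical.arbitrary V, _, Walk.nil, by simp, rfl⟩
  have hbdd : ∀ n, S n → n ≤ Fintype.card V := by
    rintro n ⟨x, y, p, hp, rfl⟩
    exact hp.length_lt.le
  set N := Nat.findGreatest S (Fintype.card V) with hN
  have hNS : S N := Nat.findGreatest_spec (Nat.zero_le _) h0
  have hmax : ∀ (x y : V) (p : G.Walk x y), p.IsPath → p.length ≤ N := by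
    intro x y p hp
    by_contra hlen
    push_neg at hlen
    exact Nat.findGreatest_is_greatest hlen (hbdd _ ⟨x, y, p, hp, rfl⟩) ⟨x, y, p, hp, rfl⟩
  obtain ⟨x, y, p, hp, hplen⟩ := hNS
  cases p with
  | nil =>
    -- N = 0 : no path of length ≥ 1, but x has a neighbor
    have hdeg := hcon x
    have : ∃ w, G.Adj x w := by
      have : 0 < (G.neighborFinset x).card := lt_trans zero_lt_one hdeg
      obtain ⟨w, hw⟩ := Finset.card_pos.mp this
      exact ⟨w, (SimpleGraph.mem_neighborFinset _ _ _).mp hw⟩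
    obtain ⟨w, hw⟩ := this
    have : (Walk.cons hw Walk.nil).length ≤ N :=
      hmax x w _ (by simp [hw.ne])
    simp [← hplen] at this
  | cons h q =>
    rename_i z
    -- h : G.Adj x z, q : G.Walk z y
    have hdeg := hcon x
    obtain ⟨w, hw, hwz⟩ : ∃ w, w ∈ G.neighborFinset x ∧ w ≠ z :=
      Finset.exists_mem_ne hdeg z
    rw [SimpleGraph.mem_neighborFinset] at hw
    by_cases hws : w ∈ (Walk.cons h q).support
    · -- build two distinct paths from x to w : contradiction with acyclicity
      have ht : ((Walk.cons h q).takeUntil w hws).IsPath := hp.takeUntil hws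
      have huniq := hG.path_unique ⟨(Walk.cons h q).takeUntil w hws, ht⟩
        ⟨Walk.cons hw Walk.nil, by simp [hw.ne]⟩
      have ht2 : (Walk.cons h q).takeUntil w hws = Walk.cons hw Walk.nil :=
        congrArg Subtype.val huniq
      have hspec := (Walk.cons h q).take_spec hws
      rw [ht2] at hspec
      have : Walk.cons hw ((Walk.cons h q).dropUntil w hws) = Walk.cons h q := by
        simpa using hspec
      have h1 := congrArg (fun r => r.getVert 1) this
      simp only [Walk.getVert_cons_succ, Walk.getVert_zero] at h1
      exact hwz h1
    · have : (Walk.cons hw.symm (Walk.cons h q)).length ≤ N :=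
        hmax w y _ (by rw [Walk.cons_isPath_iff]; exact ⟨hp, hws⟩)
      rw [Walk.length_cons, hplen] at this
      omega



section
variable [Fintype V] [DecidableEq V] (F : SimpleGraph V) [DecidableRel F.Adj]
  (p : V → Prop) [DecidablePred p]

/-- The inclusion homomorphism from the comap graph. -/
def inclHom : (F.comap (Subtype.val : Subtype p → V)) →g F :=
  ⟨Subtype.val, fun {_ _} h => h⟩

lemma degree_comap_le_erase [DecidableRel (F.comap (Subtype.val : Subtype p → V)).Adj]
    (v : V) (hv : ¬ p v) (x : Subtype p) :
    (F.comap (Subtype.val : Subtype p → V)).degree x ≤ ((F.neighborFinset x.val).erase v).card := by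
  apply Finset.card_le_card_of_injOn Subtype.val
  · intro a ha
    rw [Finset.mem_coe, SimpleGraph.mem_neighborFinset] at ha
    rw [Finset.mem_coe, Finset.mem_erase, SimpleGraph.mem_neighborFinset]
    exact ⟨fun h => hv (h ▸ a.2), ha⟩
  · exact fun a _ b _ h => Subtype.val_injective h

lemma degree_comap_le [DecidableRel (F.comap (Subtype.val : Subtype p → V)).Adj]
    (x : Subtype p) :
    (F.comap (Subtype.val : Subtype p → V)).degree x ≤ F.degree x.val := by
  apply Finset.card_le_card_of_injOn Subtype.val
  · intro a ha
    rw [Finset.mem_coe, SimpleGraph.mem_neighborFinset] at ha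
    rw [Finset.mem_coe, SimpleGraph.mem_neighborFinset]
    exact ha
  · exact fun a _ b _ h => Subtype.val_injective h

lemma comap_acyclic (hF : F.IsAcyclic) :
    (F.comap (Subtype.val : Subtype p → V)).IsAcyclic := by
  intro w c hc
  exact hF (c.map (inclHom F p)) (hc.map Subtype.val_injective)

lemma card_comp_comap_le
    (hback : ∀ a b : Subtype p, F.Reachable a.val b.val →
      (F.comap (Subtype.val : Subtype p → V)).Reachable a b) :
    Nat.card (F.comap (Subtype.val : Subtype p → V)).ConnectedComponent ≤
      Nat.card F.ConnectedComponent := by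
  apply Nat.card_le_card_of_injective (ConnectedComponent.map (inclHom F p))
  intro c d h
  obtain ⟨a, rfl⟩ := c.exists_rep
  obtain ⟨b, rfl⟩ := d.exists_rep
  exact ConnectedComponent.sound (hback a b (ConnectedComponent.exact h))

lemma card_comp_comap_add_one_le (v : V) (hv : ¬ p v)
    (hback : ∀ a b : Subtype p, F.Reachable a.val b.val →
      (F.comap (Subtype.val : Subtype p → V)).Reachable a b)
    (hiso : ∀ a : Subtype p, ¬ F.Reachable a.val v) :
    Nat.card (F.comap (Subtype.val : Subtype p → V)).ConnectedComponent + 1 ≤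
      Nat.card F.ConnectedComponent := by
  have := Nat.card_le_card_of_injective
    (Sum.elim (ConnectedComponent.map (inclHom F p))
      (fun _ : PUnit.{1} => F.connectedComponentMk v)) ?_
  · have h2 : Nat.card PUnit.{1} = 1 := Nat.card_unique
    rw [Nat.card_sum, h2] at this
    exact this
  · rintro (c | c) (d | d) h
    · obtain ⟨a, rfl⟩ := c.exists_rep
      obtain ⟨b, rfl⟩ := d.exists_rep
      exact congrArg Sum.inl
        (ConnectedComponent.sound (hback a b (ConnectedComponent.exact h)))
    · obtain ⟨a, rfl⟩ := c.exists_rep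
      exact absurd (ConnectedComponent.exact h) (hiso a)
    · obtain ⟨b, rfl⟩ := d.exists_rep
      exact absurd (ConnectedComponent.exact h.symm) (hiso b)
    · exact congrArg Sum.inr (Subsingleton.elim _ _)
end



def inclHom' (F : SimpleGraph V) (p : V → Prop) : (F.comap (Subtype.val : Subtype p → V)) →g F :=
  ⟨Subtype.val, fun {_ _} h => h⟩

lemma walk_ne_of_isPath {F : SimpleGraph V} {a b : V} (w : F.Walk a b) (hw : w.IsPath)
    (hl : 1 ≤ w.length) : a ≠ b := by
  rintro rfl
  rw [Walk.isPath_iff_eq_nil] at hw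
  subst hw
  simp at hl

lemma walk_end_eq {G : SimpleGraph V} {v : V} (hno : ∀ w, ¬ G.Adj v w) :
    ∀ {x : V} (w : G.Walk x v), x = v
  | _, .nil => rfl
  | x, .cons h q => by
    have h2 := walk_end_eq hno q
    subst h2
    exact absurd h.symm (hno x)

lemma lift_family {F : SimpleGraph V}
    {p : V → Prop} {Z' : Finset (Subtype p)} {Z2 : Finset V}
    (hZZ : ∀ a ∈ Z', (a : V) ∈ Z2) {N N' : ℕ} (hN : N ≤ N')
    (h : ∃ P : Fin N' → Σ u : Subtype p, Σ v : Subtype p,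
        (F.comap (Subtype.val : Subtype p → V)).Walk u v,
      (∀ i, (P i).2.2.IsPath ∧ (P i).1 ∈ Z' ∧ (P i).2.1 ∈ Z' ∧ 1 ≤ (P i).2.2.length) ∧
      (∀ i j, i ≠ j → List.Disjoint (P i).2.2.support (P j).2.2.support)) :
    ∃ P : Fin N → Σ u : V, Σ v : V, F.Walk u v,
      ((∀ i, (P i).2.2.IsPath ∧ (P i).1 ∈ Z2 ∧ (P i).2.1 ∈ Z2 ∧ 1 ≤ (P i).2.2.length) ∧
      (∀ i j, i ≠ j → List.Disjoint (P i).2.2.support (P j).2.2.support)) ∧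
      (∀ i z, z ∈ (P i).2.2.support → p z) := by
  classical
  obtain ⟨P, h1, h2⟩ := h
  refine ⟨fun i => ⟨((P (i.castLE hN)).1 : V), ((P (i.castLE hN)).2.1 : V),
    (P (i.castLE hN)).2.2.map (inclHom' F p)⟩, ⟨fun i => ?_, fun i j hij => ?_⟩,
    fun i z hz => ?_⟩
  · obtain ⟨hp, he1, he2, hl⟩ := h1 (i.castLE hN)
    exact ⟨Walk.map_isPath_of_injective Subtype.val_injective hp,
      hZZ _ he1, hZZ _ he2, hl.trans_eq (Walk.length_map _ _).symm⟩
  · intro a ha hb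
    replace ha : a ∈ ((P (i.castLE hN)).2.2.map (inclHom' F p)).support := ha
    replace hb : a ∈ ((P (j.castLE hN)).2.2.map (inclHom' F p)).support := hb
    rw [Walk.support_map] at ha hb
    obtain ⟨a', ha', rfl⟩ := List.mem_map.mp ha
    obtain ⟨b', hb', hba⟩ := List.mem_map.mp hb
    obtain rfl := Subtype.val_injective hba
    exact h2 _ _ (fun hc => hij (Fin.castLE_injective hN hc)) ha' hb'
  · replace hz : z ∈ ((P (i.castLE hN)).2.2.map (inclHom' F p)).support := hz
    rw [Walk.support_map] at hz
    obtain ⟨z', hz', rfl⟩ := List.mem_map.mp hz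
    exact z'.2

lemma extend_family [DecidableEq V] {F : SimpleGraph V} {Z : Finset V} {v u : V}
    (hvu : F.Adj v u) (hvZ : v ∈ Z) {N : ℕ}
    (h : ∃ P : Fin N → Σ a : V, Σ b : V, F.Walk a b,
      ((∀ i, (P i).2.2.IsPath ∧ (P i).1 ∈ insert u (Z.erase v) ∧
          (P i).2.1 ∈ insert u (Z.erase v) ∧ 1 ≤ (P i).2.2.length) ∧
      (∀ i j, i ≠ j → List.Disjoint (P i).2.2.support (P j).2.2.support)) ∧
      (∀ i z, z ∈ (P i).2.2.support → z ≠ v)) :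
    ∃ P : Fin N → Σ a : V, Σ b : V, F.Walk a b,
      (∀ i, (P i).2.2.IsPath ∧ (P i).1 ∈ Z ∧ (P i).2.1 ∈ Z ∧ 1 ≤ (P i).2.2.length) ∧
      (∀ i j, i ≠ j → List.Disjoint (P i).2.2.support (P j).2.2.support) := by
  classical
  obtain ⟨P, ⟨h1, h2⟩, h3⟩ := h
  -- extension operation
  classical
  set Q : (Σ a : V, Σ b : V, F.Walk a b) → Σ a : V, Σ b : V, F.Walk a b := fun σ =>
    if h1 : σ.1 = u then ⟨v, σ.2.1, Walk.cons (by rw [h1]; exact hvu) σ.2.2⟩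
    else if h2 : σ.2.1 = u then ⟨v, σ.1, Walk.cons (by rw [h2]; exact hvu) σ.2.2.reverse⟩
    else σ with hQ
  have hQ1 : ∀ σ (h : σ.1 = u),
      Q σ = ⟨v, σ.2.1, Walk.cons (by rw [h]; exact hvu) σ.2.2⟩ := by
    intro σ h
    rw [hQ]
    dsimp only
    rw [dif_pos h]
  have hQ2 : ∀ σ (ha : σ.1 ≠ u) (h : σ.2.1 = u),
      Q σ = ⟨v, σ.1, Walk.cons (by rw [h]; exact hvu) σ.2.2.reverse⟩ := by
    intro σ ha h
    rw [hQ]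
    dsimp only
    rw [dif_neg ha, dif_pos h]
  have hQ3 : ∀ σ (ha : σ.1 ≠ u) (hb : σ.2.1 ≠ u), Q σ = σ := by
    intro σ ha hb
    rw [hQ]
    dsimp only
    rw [dif_neg ha, dif_neg hb]
  have hQsup : ∀ σ, (Q σ).2.2.support ⊆ v :: σ.2.2.support := by
    intro σ
    by_cases ha : σ.1 = u
    · rw [hQ1 σ ha]
      simp
    · by_cases hb : σ.2.1 = u
      · rw [hQ2 σ ha hb]
        intro z hz
        simp only [Walk.support_cons, Walk.support_reverse, List.mem_cons] at hz ⊢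
        rcases hz with rfl | hz
        · exact Or.inl rfl
        · exact Or.inr (List.mem_reverse.mp hz)
      · rw [hQ3 σ ha hb]
        exact fun z hz => List.mem_cons_of_mem _ hz
  have hQv : ∀ σ, v ∈ (Q σ).2.2.support → u ∈ σ.2.2.support ∨ v ∈ σ.2.2.support := by
    intro σ
    by_cases ha : σ.1 = u
    · rw [hQ1 σ ha]
      intro _
      exact Or.inl (ha ▸ σ.2.2.start_mem_support)
    · by_cases hb : σ.2.1 = u
      · rw [hQ2 σ ha hb]
        intro _
        exact Or.inl (hb ▸ σ.2.2.end_mem_support)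
      · rw [hQ3 σ ha hb]
        exact fun hz => Or.inr hz
  refine ⟨fun i => Q (P i), fun i => ?_, fun i j hij => ?_⟩
  · beta_reduce
    obtain ⟨hp, he1, he2, hl⟩ := h1 i
    have hne := walk_ne_of_isPath _ hp hl
    have hnv := h3 i
    by_cases ha : (P i).1 = u
    · rw [hQ1 _ ha]
      refine ⟨?_, hvZ, ?_, by simp⟩
      · rw [Walk.cons_isPath_iff]
        exact ⟨hp, fun hc => hnv v hc rfl⟩
      · rcases Finset.mem_insert.mp he2 with hc | hc
        · exact absurd (ha.trans hc.symm) hne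
        · exact Finset.mem_of_mem_erase hc
    · by_cases hb : (P i).2.1 = u
      · rw [hQ2 _ ha hb]
        refine ⟨?_, hvZ, ?_, by simp⟩
        · rw [Walk.cons_isPath_iff]
          refine ⟨hp.reverse, fun hc => hnv v ?_ rfl⟩
          rwa [Walk.support_reverse, List.mem_reverse] at hc
        · rcases Finset.mem_insert.mp he1 with hc | hc
          · exact absurd hc ha
          · exact Finset.mem_of_mem_erase hc
      · rw [hQ3 _ ha hb]
        refine ⟨hp, ?_, ?_, hl⟩
        · rcases Finset.mem_insert.mp he1 with hc | hc
          · exact absurd hc ha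
          · exact Finset.mem_of_mem_erase hc
        · rcases Finset.mem_insert.mp he2 with hc | hc
          · exact absurd hc hb
          · exact Finset.mem_of_mem_erase hc
  · beta_reduce
    intro z hzi hzj
    have hzi' := hQsup _ hzi
    have hzj' := hQsup _ hzj
    rcases List.mem_cons.mp hzi' with rfl | hi
    · rcases hQv _ hzi with hui | hvi
      · rcases hQv _ hzj with huj | hvj
        · exact h2 i j hij hui huj
        · exact h3 j z hvj rfl
      · exact h3 i z hvi rfl
    · rcases List.mem_cons.mp hzj' with rfl | hj
      · exact h3 i z hi rfl
      · exact h2 i j hij hi hj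

set_option maxHeartbeats 1000000 in
lemma aux_main : ∀ (n : ℕ) (V : Type*) [Fintype V] [DecidableEq V] (F : SimpleGraph V)
    [DecidableRel F.Adj], Fintype.card V ≤ n → F.IsAcyclic → (∀ x, F.degree x ≤ 3) →
    ∀ Z : Finset V, (∀ x ∈ Z, F.degree x ≤ 2) →
    ∃ P : Fin ((Z.card - Nat.card F.ConnectedComponent + 1) / 2) → Σ a : V, Σ b : V, F.Walk a b,
      (∀ i, (P i).2.2.IsPath ∧ (P i).1 ∈ Z ∧ (P i).2.1 ∈ Z ∧ 1 ≤ (P i).2.2.length) ∧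
      (∀ i j, i ≠ j → List.Disjoint (P i).2.2.support (P j).2.2.support) := by
  intro n
  induction n with
  | zero =>
    intro V _ _ F _ hcard _ _ Z _
    have hZ0 : Z.card = 0 := le_antisymm (le_trans (Finset.card_le_univ Z) hcard) (Nat.zero_le _)
    have hc : (Z.card - Nat.card F.ConnectedComponent + 1) / 2 = 0 := by omega
    rw [hc]
    exact ⟨Fin.elim0, fun i => i.elim0, fun i => i.elim0⟩
  | succ n ih =>
    intro V _ _ F _ hcard hForest hSub Z hZ
    by_cases htriv : Z.card ≤ Nat.card F.ConnectedComponent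
    · have hc : (Z.card - Nat.card F.ConnectedComponent + 1) / 2 = 0 := by omega
      rw [hc]
      exact ⟨Fin.elim0, fun i => i.elim0, fun i => i.elim0⟩
    push_neg at htriv
    have hZpos : 0 < Z.card := by omega
    obtain ⟨z0, hz0⟩ := Finset.card_pos.mp hZpos
    haveI : Nonempty V := ⟨z0⟩
    obtain ⟨v, hv⟩ := exists_degree_le_one F hForest
    by_cases hdeg0 : F.degree v = 0
    · -- Case A : v isolated
      have hno_adj : ∀ w, ¬ F.Adj v w := by
        intro w hw
        have hmem : w ∈ F.neighborFinset v := (SimpleGraph.mem_neighborFinset _ _ _).mpr hw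
        have h2 : 0 < F.degree v := Finset.card_pos.mpr ⟨w, hmem⟩
        omega
      set p : V → Prop := fun x => x ≠ v with hp
      haveI : DecidablePred p := fun x => inferInstanceAs (Decidable (x ≠ v))
      haveI hdrel : DecidableRel (F.comap (Subtype.val : Subtype p → V)).Adj :=
        fun a b => inferInstanceAs (Decidable (F.Adj a.val b.val))
      have hpv : ¬ p v := by simp [hp]
      have hcard' : Fintype.card (Subtype p) ≤ n := by
        exact Nat.lt_succ_iff.mp
          (lt_of_lt_of_le (Fintype.card_subtype_lt (p := p) (x := v) hpv) hcard)
      have hforest' := comap_acyclic F p hForest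
      have hsub' : ∀ x, (F.comap (Subtype.val : Subtype p → V)).degree x ≤ 3 :=
        fun x => le_trans (degree_comap_le F p x) (hSub _)
      set Z' : Finset (Subtype p) := Z.subtype p with hZ'def
      have hZ'2 : ∀ a ∈ Z', (F.comap (Subtype.val : Subtype p → V)).degree a ≤ 2 :=
        fun a ha => le_trans (degree_comap_le F p a) (hZ _ (by simpa [hZ'def] using ha))
      have fam := ih (Subtype p) (F.comap (Subtype.val : Subtype p → V)) hcard'
        hforest' hsub' Z' hZ'2
      have hback : ∀ a b : Subtype p, F.Reachable ↑a ↑b →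
          (F.comap (Subtype.val : Subtype p → V)).Reachable a b := by
        intro a b hr
        obtain ⟨w⟩ := hr
        refine reach_comap w.toPath.1 ?_ a.2 b.2
        intro z hz
        show z ≠ v
        rintro rfl
        obtain ⟨a', b', hab, ha', hb', _, _⟩ :=
          internal_two_nbrs w.toPath.1 w.toPath.2 hz (fun h => a.2 h.symm) (fun h => b.2 h.symm)
        exact hno_adj a' ha'
      have hiso : ∀ a : Subtype p, ¬ F.Reachable ↑a v := by
        intro a hr
        obtain ⟨w⟩ := hr
        exact a.2 (walk_end_eq hno_adj w)
      have hm' := card_comp_comap_add_one_le F p v hpv hback hiso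
      have hkZ : Z.card ≤ Z'.card + 1 := by
        have hsub2 : Z ⊆ insert v (Z.filter p) := by
          intro x hx
          by_cases hxv : x = v
          · simp [hxv]
          · exact Finset.mem_insert_of_mem (Finset.mem_filter.mpr ⟨hx, hxv⟩)
        calc Z.card ≤ (insert v (Z.filter p)).card := Finset.card_le_card hsub2
          _ ≤ (Z.filter p).card + 1 := Finset.card_insert_le _ _
          _ = Z'.card + 1 := by rw [hZ'def, Finset.card_subtype]
      have hle : (Z.card - Nat.card F.ConnectedComponent + 1) / 2 ≤
          (Z'.card - Nat.card (F.comap (Subtype.val : Subtype p → V)).ConnectedComponent + 1) / 2 := by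
        omega
      obtain ⟨P, hP, _⟩ := lift_family (Z2 := Z)
        (fun a ha => by simpa [hZ'def] using ha) hle fam
      exact ⟨P, hP⟩
    · -- v has degree exactly 1, with unique neighbor u
      have hdeg1 : F.degree v = 1 := by omega
      obtain ⟨u, hu⟩ : ∃ u, F.neighborFinset v = {u} := Finset.card_eq_one.mp hdeg1
      have hvu : F.Adj v u := by
        have hmem : u ∈ F.neighborFinset v := by
          rw [hu]; exact Finset.mem_singleton_self u
        rwa [SimpleGraph.mem_neighborFinset] at hmem
      have huniq : ∀ w, F.Adj v w → w = u := by
        intro w hw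
        have hmem : w ∈ F.neighborFinset v := (SimpleGraph.mem_neighborFinset _ _ _).mpr hw
        rw [hu] at hmem
        exact Finset.mem_singleton.mp hmem
      have hAvoidV : ∀ {a b : V} (w : F.Walk a b), w.IsPath → a ≠ v → b ≠ v →
          ∀ z ∈ w.support, z ≠ v := by
        intro a b w hw ha hb z hz
        rintro rfl
        obtain ⟨a', b', hab, ha', hb', _, _⟩ :=
          internal_two_nbrs w hw hz (fun h => ha h.symm) (fun h => hb h.symm)
        exact hab ((huniq a' ha').trans (huniq b' hb').symm)
      by_cases hvZ : v ∈ Z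
      · by_cases huZ : u ∈ Z
        · -- Case D : v ∈ Z, u ∈ Z, take the edge v-u as a path and delete both
          set p : V → Prop := fun x => x ≠ v ∧ x ≠ u with hp
          haveI : DecidablePred p := fun x => inferInstanceAs (Decidable (x ≠ v ∧ x ≠ u))
          haveI hdrel : DecidableRel (F.comap (Subtype.val : Subtype p → V)).Adj :=
            fun a b => inferInstanceAs (Decidable (F.Adj a.val b.val))
          have hpv : ¬ p v := by simp [hp]
          have hcard' : Fintype.card (Subtype p) ≤ n := by
            exact Nat.lt_succ_iff.mp
              (lt_of_lt_of_le (Fintype.card_subtype_lt (p := p) (x := v) hpv) hcard)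
          have hforest' := comap_acyclic F p hForest
          have hsub' : ∀ x, (F.comap (Subtype.val : Subtype p → V)).degree x ≤ 3 :=
            fun x => le_trans (degree_comap_le F p x) (hSub _)
          set Z' : Finset (Subtype p) := ((Z.erase v).erase u).subtype p with hZ'def
          have hZ'2 : ∀ a ∈ Z', (F.comap (Subtype.val : Subtype p → V)).degree a ≤ 2 := by
            intro a ha
            refine le_trans (degree_comap_le F p a) (hZ _ ?_)
            have := Finset.mem_subtype.mp (hZ'def ▸ ha)
            exact Finset.mem_of_mem_erase (Finset.mem_of_mem_erase this)
          have fam := ih (Subtype p) (F.comap (Subtype.val : Subtype p → V)) hcard'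
            hforest' hsub' Z' hZ'2
          have hback : ∀ a b : Subtype p, F.Reachable ↑a ↑b →
              (F.comap (Subtype.val : Subtype p → V)).Reachable a b := by
            intro a b hr
            obtain ⟨w⟩ := hr
            have hAv : ∀ z ∈ w.toPath.1.support, z ≠ v :=
              hAvoidV w.toPath.1 w.toPath.2 a.2.1 b.2.1
            have hAu : ∀ z ∈ w.toPath.1.support, z ≠ u := by
              intro z hz
              rintro rfl
              obtain ⟨a', b', hab, ha', hb', ha's, hb's⟩ :=
                internal_two_nbrs w.toPath.1 w.toPath.2 hz
                  (fun h => a.2.2 h.symm) (fun h => b.2.2 h.symm)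
              have h3 := three_le_degree_of_nbrs hab (hAv a' ha's) (hAv b' hb's) ha' hb' hvu.symm
              have := hZ _ huZ
              omega
            exact reach_comap w.toPath.1 (fun z hz => ⟨hAv z hz, hAu z hz⟩) a.2 b.2
          have hm' := card_comp_comap_le F p hback
          have huZv : u ∈ Z.erase v := Finset.mem_erase.mpr ⟨hvu.ne', huZ⟩
          have hkZ : Z.card ≤ Z'.card + 2 := by
            have h1 : Z'.card = ((Z.erase v).erase u).card := by
              rw [hZ'def, Finset.card_subtype]
              congr 1
              refine Finset.filter_true_of_mem ?_
              intro x hx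
              have hxu := Finset.ne_of_mem_erase hx
              have hxv := Finset.ne_of_mem_erase (Finset.mem_of_mem_erase hx)
              exact ⟨hxv, hxu⟩
            have h2 : ((Z.erase v).erase u).card = (Z.erase v).card - 1 :=
              Finset.card_erase_of_mem huZv
            have h3 : (Z.erase v).card = Z.card - 1 := Finset.card_erase_of_mem hvZ
            have h4 : 0 < (Z.erase v).card := Finset.card_pos.mpr ⟨u, huZv⟩
            omega
          have hle : (Z.card - Nat.card F.ConnectedComponent + 1) / 2 ≤
              (Z'.card - Nat.card
                (F.comap (Subtype.val : Subtype p → V)).ConnectedComponent + 1) / 2 + 1 := by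
            omega
          obtain ⟨L, ⟨hL1, hL2⟩, hL3⟩ := lift_family (Z2 := Z)
            (fun a ha => Finset.mem_of_mem_erase (Finset.mem_of_mem_erase
              (Finset.mem_subtype.mp (hZ'def ▸ ha)))) le_rfl fam
          refine ⟨fun i => if h0 : (i : ℕ) = 0 then ⟨v, u, Walk.cons hvu Walk.nil⟩
            else L ⟨(i : ℕ) - 1, by have := i.isLt; omega⟩, fun i => ?_, fun i j hij => ?_⟩
          · beta_reduce
            by_cases h0 : (i : ℕ) = 0
            · rw [dif_pos h0]
              exact ⟨by simp [hvu.ne], hvZ, huZ, by simp⟩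
            · rw [dif_neg h0]
              exact hL1 _
          · beta_reduce
            by_cases h0 : (i : ℕ) = 0 <;> by_cases h0' : (j : ℕ) = 0
            · exact absurd (Fin.ext (h0.trans h0'.symm)) hij
            · rw [dif_pos h0, dif_neg h0']
              intro z hz hz'
              have hpz := hL3 _ z hz'
              simp only [Walk.support_cons, Walk.support_nil, List.mem_cons,
                List.mem_singleton, List.not_mem_nil, or_false] at hz
              rcases hz with rfl | rfl
              · exact hpz.1 rfl
              · exact hpz.2 rfl
            · rw [dif_neg h0, dif_pos h0']
              intro z hz hz'
              have hpz := hL3 _ z hz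
              simp only [Walk.support_cons, Walk.support_nil, List.mem_cons,
                List.mem_singleton, List.not_mem_nil, or_false] at hz'
              rcases hz' with rfl | rfl
              · exact hpz.1 rfl
              · exact hpz.2 rfl
            · rw [dif_neg h0, dif_neg h0']
              refine hL2 _ _ ?_
              intro hc
              have := congrArg Fin.val hc
              simp only at this
              exact hij (Fin.ext (by omega))
        · -- Case C : v ∈ Z, u ∉ Z : delete v, add u to Z
          set p : V → Prop := fun x => x ≠ v with hp
          haveI : DecidablePred p := fun x => inferInstanceAs (Decidable (x ≠ v))
          haveI hdrel : DecidableRel (F.comap (Subtype.val : Subtype p → V)).Adj :=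
            fun a b => inferInstanceAs (Decidable (F.Adj a.val b.val))
          have hpv : ¬ p v := by simp [hp]
          have hcard' : Fintype.card (Subtype p) ≤ n := by
            exact Nat.lt_succ_iff.mp
              (lt_of_lt_of_le (Fintype.card_subtype_lt (p := p) (x := v) hpv) hcard)
          have hforest' := comap_acyclic F p hForest
          have hsub' : ∀ x, (F.comap (Subtype.val : Subtype p → V)).degree x ≤ 3 :=
            fun x => le_trans (degree_comap_le F p x) (hSub _)
          set Z' : Finset (Subtype p) := (insert u (Z.erase v)).subtype p with hZ'def
          have hZ'2 : ∀ a ∈ Z', (F.comap (Subtype.val : Subtype p → V)).degree a ≤ 2 := by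
            intro a ha
            have hmem := Finset.mem_subtype.mp (hZ'def ▸ ha)
            rcases Finset.mem_insert.mp hmem with hau | haZ
            · refine le_trans (degree_comap_le_erase F p v hpv a) ?_
              have hveq : ((F.neighborFinset (↑a : V)).erase v).card =
                  F.degree (↑a : V) - 1 := by
                refine Finset.card_erase_of_mem ?_
                rw [SimpleGraph.mem_neighborFinset, hau]
                exact hvu.symm
              have := hSub (↑a : V)
              have hdega : 0 < F.degree (↑a : V) := by
                refine Finset.card_pos.mpr ⟨v, ?_⟩
                rw [SimpleGraph.mem_neighborFinset, hau]
                exact hvu.symm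
              omega
            · exact le_trans (degree_comap_le F p a) (hZ _ (Finset.mem_of_mem_erase haZ))
          have fam := ih (Subtype p) (F.comap (Subtype.val : Subtype p → V)) hcard'
            hforest' hsub' Z' hZ'2
          have hback : ∀ a b : Subtype p, F.Reachable ↑a ↑b →
              (F.comap (Subtype.val : Subtype p → V)).Reachable a b := by
            intro a b hr
            obtain ⟨w⟩ := hr
            exact reach_comap w.toPath.1
              (hAvoidV w.toPath.1 w.toPath.2 a.2 b.2) a.2 b.2
          have hm' := card_comp_comap_le F p hback
          have hkZ : Z'.card = Z.card := by
            have h1 : Z'.card = (insert u (Z.erase v)).card := by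
              rw [hZ'def, Finset.card_subtype]
              congr 1
              refine Finset.filter_true_of_mem ?_
              intro x hx
              rcases Finset.mem_insert.mp hx with rfl | hxZ
              · exact hvu.ne'
              · exact Finset.ne_of_mem_erase hxZ
            have h2 : u ∉ Z.erase v := fun hc => huZ (Finset.mem_of_mem_erase hc)
            have h3 : (Z.erase v).card = Z.card - 1 := Finset.card_erase_of_mem hvZ
            rw [h1, Finset.card_insert_of_notMem h2, h3]
            omega
          have hle : (Z.card - Nat.card F.ConnectedComponent + 1) / 2 ≤
              (Z'.card - Nat.card
                (F.comap (Subtype.val : Subtype p → V)).ConnectedComponent + 1) / 2 := by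
            omega
          have lifted := lift_family (Z2 := insert u (Z.erase v))
            (fun a ha => Finset.mem_subtype.mp (hZ'def ▸ ha)) hle fam
          obtain ⟨L, hL12, hL3⟩ := lifted
          exact extend_family hvu hvZ ⟨L, hL12, hL3⟩
      · -- Case B : v ∉ Z : just delete v
        set p : V → Prop := fun x => x ≠ v with hp
        haveI : DecidablePred p := fun x => inferInstanceAs (Decidable (x ≠ v))
        haveI hdrel : DecidableRel (F.comap (Subtype.val : Subtype p → V)).Adj :=
          fun a b => inferInstanceAs (Decidable (F.Adj a.val b.val))
        have hpv : ¬ p v := by simp [hp]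
        have hcard' : Fintype.card (Subtype p) ≤ n := by
          exact Nat.lt_succ_iff.mp
            (lt_of_lt_of_le (Fintype.card_subtype_lt (p := p) (x := v) hpv) hcard)
        have hforest' := comap_acyclic F p hForest
        have hsub' : ∀ x, (F.comap (Subtype.val : Subtype p → V)).degree x ≤ 3 :=
          fun x => le_trans (degree_comap_le F p x) (hSub _)
        set Z' : Finset (Subtype p) := Z.subtype p with hZ'def
        have hZ'2 : ∀ a ∈ Z', (F.comap (Subtype.val : Subtype p → V)).degree a ≤ 2 :=
          fun a ha => le_trans (degree_comap_le F p a) (hZ _ (by simpa [hZ'def] using ha))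
        have fam := ih (Subtype p) (F.comap (Subtype.val : Subtype p → V)) hcard'
          hforest' hsub' Z' hZ'2
        have hback : ∀ a b : Subtype p, F.Reachable ↑a ↑b →
            (F.comap (Subtype.val : Subtype p → V)).Reachable a b := by
          intro a b hr
          obtain ⟨w⟩ := hr
          exact reach_comap w.toPath.1
            (hAvoidV w.toPath.1 w.toPath.2 a.2 b.2) a.2 b.2
        have hm' := card_comp_comap_le F p hback
        have hkZ : Z'.card = Z.card := by
          rw [hZ'def, Finset.card_subtype]
          congr 1
          exact Finset.filter_true_of_mem (fun x hx hc => hvZ (hc ▸ hx))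
        have hle : (Z.card - Nat.card F.ConnectedComponent + 1) / 2 ≤
            (Z'.card - Nat.card
              (F.comap (Subtype.val : Subtype p → V)).ConnectedComponent + 1) / 2 := by
          omega
        obtain ⟨P, hP, _⟩ := lift_family (Z2 := Z)
          (fun a ha => by simpa [hZ'def] using ha) hle fam
        exact ⟨P, hP⟩

end ForestHelpers

/-- Let `F` be a subcubic forest with `m` connected components and let `Z` be a subset of
the vertices of `F`, all of degree at most 2 in `F`. Then `F` contains at least
`⌈(|Z| − m)/2⌉` pairwise vertex-disjoint `Z`-paths. -/
theorem stmt_3 {V : Type*} [Fintype V] [DecidableEq V]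
    (F : SimpleGraph V) [DecidableRel F.Adj] [Fintype F.ConnectedComponent]
    (hForest : F.IsAcyclic)
    (hSubcubic : ∀ v : V, F.degree v ≤ 3)
    (m : ℕ) (hm : m = Fintype.card F.ConnectedComponent)
    (Z : Finset V)
    (hZ : ∀ v ∈ Z, F.degree v ≤ 2) :
    ∃ P : Fin ((Z.card - m + 1) / 2) → Σ u : V, Σ v : V, F.Walk u v,
      (∀ i, (P i).2.2.IsPath ∧ (P i).1 ∈ Z ∧ (P i).2.1 ∈ Z ∧ 1 ≤ (P i).2.2.length) ∧
      (∀ i j, i ≠ j → List.Disjoint (P i).2.2.support (P j).2.2.support) := by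
  have hm2 : m = Nat.card F.ConnectedComponent := by
    rw [hm, Nat.card_eq_fintype_card]
  rw [hm2]
  exact aux_main (Fintype.card V) V F le_rfl hForest hSubcubic Z hZ
end

section
/- Let C be a connected graph and let c₁, c₂, c₃ be three distinct vertices of C. Then there exists α ∈ {1,2,3} such that the other two vertices c_β, c_γ (with {α,β,γ} = {1,2,3}) lie in the same connected component of C − c_α. -/
lemma walk_to_induce_reachable {V : Type*} (C : SimpleGraph V) (s : Set V) {a b : V}
    (p : C.Walk a b) (hp : ∀ v ∈ p.support, v ∈ s) :
    (C.induce s).Reachable ⟨a, hp a p.start_mem_support⟩ ⟨b, hp b p.end_mem_support⟩ := by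
  induction p with
  | nil => rfl
  | @cons u v w h q ih =>
    have hq : ∀ x ∈ q.support, x ∈ s := fun x hx => hp x (by simp [hx])
    exact (SimpleGraph.Adj.reachable (by exact h :
      (C.induce s).Adj ⟨u, hp u (by simp)⟩ ⟨v, hq v q.start_mem_support⟩)).trans (ih hq)

/-- Let `C` be a connected graph and `c₁, c₂, c₃` three distinct vertices. Then for some
`α ∈ {1,2,3}`, the other two vertices lie in the same connected component of `C − c_α`. -/
theorem stmt_9 {V : Type*} (C : SimpleGraph V) (hconn : C.Connected)
    (c₁ c₂ c₃ : V) (h12 : c₁ ≠ c₂) (h13 : c₁ ≠ c₃) (h23 : c₂ ≠ c₃) :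
    (C.induce {v | v ≠ c₁}).Reachable
        ⟨c₂, by simpa using h12.symm⟩ ⟨c₃, by simpa using h13.symm⟩ ∨
    (C.induce {v | v ≠ c₂}).Reachable
        ⟨c₁, by simpa using h12⟩ ⟨c₃, by simpa using h23.symm⟩ ∨
    (C.induce {v | v ≠ c₃}).Reachable
        ⟨c₁, by simpa using h13⟩ ⟨c₂, by simpa using h23⟩ := by
  classical
  obtain ⟨w⟩ := hconn.preconnected c₂ c₃
  obtain ⟨p, hpath⟩ := w.toPath
  by_cases hc1 : c₁ ∈ (p : C.Walk c₂ c₃).support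
  · -- split at c₁; prefix c₂ → c₁ avoids c₃
    right; right
    set q := (p : C.Walk c₂ c₃).takeUntil c₁ hc1 with hq
    set r := (p : C.Walk c₂ c₃).dropUntil c₁ hc1 with hr
    have hspec := (p : C.Walk c₂ c₃).take_spec hc1
    have hnodup : ((p : C.Walk c₂ c₃).support).Nodup := hpath.support_nodup
    have hsup : (p : C.Walk c₂ c₃).support = q.support ++ r.support.tail := by
      rw [← hspec, SimpleGraph.Walk.support_append]
    have hc3q : c₃ ∉ q.support := by
      intro hc3
      have hc3r : c₃ ∈ r.support.tail := by
        have : c₃ ∈ r.support := r.end_mem_support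
        rw [SimpleGraph.Walk.support_eq_cons] at this
        rcases List.mem_cons.mp this with h | h
        · exact absurd h.symm h13
        · exact h
      rw [hsup] at hnodup
      exact (List.disjoint_of_nodup_append hnodup) hc3 hc3r
    have hmem : ∀ v ∈ q.support, v ∈ {v | v ≠ c₃} := by
      intro v hv
      simp only [Set.mem_setOf_eq]
      rintro rfl; exact hc3q hv
    exact (walk_to_induce_reachable C _ q.reverse (by
      intro v hv; exact hmem v (by simpa using hv))).symm.symm
  · left
    have hmem : ∀ v ∈ (p : C.Walk c₂ c₃).support, v ∈ {v | v ≠ c₁} := by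
      intro v hv
      simp only [Set.mem_setOf_eq]
      rintro rfl; exact hc1 hv
    exact walk_to_induce_reachable C _ _ hmem
end

section
/- Let G be a graph, A ⊆ V(G), and k a positive integer. If G contains a subcubic forest F as a subgraph such that the set Z of vertices of F of degree at most 2 satisfies Z ⊆ A, |Z| ≥ 2k + m − 1 where m is the number of components of F, then G contains k pairwise vertex-disjoint A-paths. -/
set_option linter.unusedSectionVars false
set_option maxHeartbeats 1000000

open SimpleGraph

namespace Stmt11Helpers

variable {V : Type*} [DecidableEq V] {G : SimpleGraph V}



lemma walk_length_pos_of_ne {H : SimpleGraph V} {u v : V} (p : H.Walk u v) (h : u ≠ v) :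
    1 ≤ p.length := by
  cases p with
  | nil => exact absurd rfl h
  | cons h q => simp [Nat.succ_le_succ]

lemma step_aux {H : SimpleGraph V} {S : Finset V} :
    ∀ {r v : V} (q : H.Walk r v), q.IsPath → v ≠ r → (∀ x ∈ q.support, x ∈ S) →
    ∃ (c : V) (q' : H.Walk c v), H.Adj r c ∧ (∀ x ∈ q'.support, x ∈ S ∧ x ≠ r) := by
  intro r v q
  cases q with
  | nil => intro _ h _; exact absurd rfl h
  | @cons _ w _ h q' =>
    intro hp hvr hs
    refine ⟨w, q', h, fun x hx => ⟨hs x (by simp [Walk.support_cons, hx]), ?_⟩⟩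
    rintro rfl
    have := hp.support_nodup
    rw [Walk.support_cons] at this
    exact (List.nodup_cons.mp this).1 hx

/-- from any walk to r inside S, with v ≠ r, get a child c of r and a walk v→c inside S∖{r}. -/
lemma step_to_child {H : SimpleGraph V} {S : Finset V} {v r : V} (hvr : v ≠ r) (p : H.Walk v r)
    (hS : ∀ x ∈ p.support, x ∈ S) :
    ∃ (c : V) (q : H.Walk v c), H.Adj r c ∧ (∀ x ∈ q.support, x ∈ S ∧ x ≠ r) := by
  have hq : (p.toPath : H.Walk v r).IsPath := p.toPath.2
  have hqs : ∀ x ∈ (p.toPath : H.Walk v r).support, x ∈ S :=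
    fun x hx => hS x (Walk.support_toPath_subset p hx)
  obtain ⟨c, q', hadj, hq'⟩ := step_aux (p.toPath : H.Walk v r).reverse hq.reverse hvr
    (by intro x hx; rw [Walk.support_reverse] at hx; exact hqs x (List.mem_reverse.mp hx))
  refine ⟨c, q'.reverse, hadj, ?_⟩
  intro x hx
  rw [Walk.support_reverse] at hx
  exact hq' x (List.mem_reverse.mp hx)

lemma dangling_extend {H : SimpleGraph V} {t c r : V} (d : H.Walk t c) (hd : d.IsPath)
    (h : H.Adj c r) (hr : r ∉ d.support) :
    ∃ e : H.Walk t r, e.IsPath ∧ (∀ x, x ∈ e.support ↔ x = r ∨ x ∈ d.support) := by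
  refine ⟨(Walk.cons h.symm d.reverse).reverse, ?_, ?_⟩
  · apply Walk.IsPath.reverse
    rw [Walk.cons_isPath_iff]
    exact ⟨hd.reverse, by rwa [Walk.support_reverse, List.mem_reverse]⟩
  · intro x
    simp only [Walk.support_reverse, Walk.support_cons, List.mem_reverse, List.mem_cons]

lemma marry {H : SimpleGraph V} {t1 c1 t2 c2 r : V} (d1 : H.Walk t1 c1) (d2 : H.Walk t2 c2)
    (h1 : H.Adj c1 r) (h2 : H.Adj r c2) (hp1 : d1.IsPath) (hp2 : d2.IsPath)
    (hr1 : r ∉ d1.support) (hr2 : r ∉ d2.support)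
    (hdisj : List.Disjoint d1.support d2.support) :
    ∃ e : H.Walk t1 t2, e.IsPath ∧ 1 ≤ e.length ∧
      (∀ x, x ∈ e.support ↔ x ∈ d1.support ∨ x = r ∨ x ∈ d2.support) := by
  refine ⟨d1.append (Walk.cons h1 (Walk.cons h2 d2.reverse)), ?_, ?_, ?_⟩
  · rw [Walk.isPath_def, Walk.support_append, Walk.support_cons, Walk.support_cons,
      List.tail_cons, List.nodup_append]
    refine ⟨hp1.support_nodup, ?_, ?_⟩
    · rw [List.nodup_cons]
      refine ⟨by rwa [Walk.support_reverse, List.mem_reverse], ?_⟩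
      rw [Walk.support_reverse, List.nodup_reverse]
      exact hp2.support_nodup
    · intro x hx _ hx2 rfl
      rcases List.mem_cons.mp hx2 with rfl | hx2
      · exact hr1 hx
      · rw [Walk.support_reverse, List.mem_reverse] at hx2
        exact hdisj hx hx2
  · rw [Walk.length_append]; simp; omega
  · intro x
    rw [Walk.support_append, List.mem_append, Walk.support_cons, Walk.support_cons,
      List.tail_cons, List.mem_cons, Walk.support_reverse, List.mem_reverse]



def homCoe (F : G.Subgraph) : F.coe →g F.spanningCoe where
  toFun := Subtype.val
  map_rel' := fun h => h

lemma homCoe_inj (F : G.Subgraph) : Function.Injective (homCoe F) := Subtype.val_injective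

lemma support_subset_verts {F : G.Subgraph} :
    ∀ {u v : V} (p : F.spanningCoe.Walk u v), ¬ p.Nil → ∀ x ∈ p.support, x ∈ F.verts := by
  intro u v p
  induction p with
  | nil => intro h; exact absurd Walk.Nil.nil h
  | @cons u w v h q ih =>
    intro _ x hx
    rw [Walk.support_cons, List.mem_cons] at hx
    rcases hx with rfl | hx
    · exact F.edge_vert h
    · by_cases hn : q.Nil
      · rw [Walk.nil_iff_support_eq] at hn
        rw [hn, List.mem_singleton] at hx
        subst hx
        exact F.edge_vert (F.adj_symm h)
      · exact ih hn x hx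

lemma exists_lift {F : G.Subgraph} :
    ∀ {u v : V} (p : F.spanningCoe.Walk u v) (hu : u ∈ F.verts) (hv : v ∈ F.verts),
    ∃ q : F.coe.Walk ⟨u, hu⟩ ⟨v, hv⟩, q.map (homCoe F) = p := by
  intro u v p
  induction p with
  | nil => intro hu hv; exact ⟨Walk.nil, rfl⟩
  | @cons u w v h q ih =>
    intro hu hv
    have hw : w ∈ F.verts := F.edge_vert (F.adj_symm h)
    obtain ⟨q', hq'⟩ := ih hw hv
    refine ⟨Walk.cons (by exact h : F.coe.Adj ⟨u, hu⟩ ⟨w, hw⟩) q', ?_⟩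
    subst hq'; rfl

lemma spanningCoe_isAcyclic {F : G.Subgraph} (h : F.coe.IsAcyclic) : F.spanningCoe.IsAcyclic := by
  intro v c hc
  have hnn : ¬ c.Nil := hc.not_nil
  have hv : v ∈ F.verts := support_subset_verts c hnn v c.start_mem_support
  obtain ⟨q, hq⟩ := exists_lift c hv hv
  have : q.IsCycle := by
    rw [← Walk.map_isCycle_iff_of_injective (homCoe_inj F), hq]
    exact hc
  exact h q this

lemma degree_spanningCoe_eq {F : G.Subgraph} [DecidableRel F.spanningCoe.Adj] [Fintype V] (v : V) :
    F.spanningCoe.degree v = (F.neighborSet v).ncard := by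
  rw [← card_neighborSet_eq_degree, ← Nat.card_eq_fintype_card, Nat.card_coe_set_eq]
  rfl



def PathSig (H : SimpleGraph V) := Σ u : V, Σ v : V, H.Walk u v

def Disj {H : SimpleGraph V} (a b : PathSig H) : Prop :=
  List.Disjoint a.2.2.support b.2.2.support

def GoodList {H : SimpleGraph V} (S Zf : Finset V) (L : List (PathSig H)) : Prop :=
  (∀ p ∈ L, p.2.2.IsPath ∧ p.1 ∈ Zf ∧ p.2.1 ∈ Zf ∧ 1 ≤ p.2.2.length ∧
    ∀ x ∈ p.2.2.support, x ∈ S) ∧ L.Pairwise Disj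

def zset [Fintype V] (H : SimpleGraph V) [DecidableRel H.Adj] (S : Finset V) (r : V) : Finset V :=
  S.filter (fun v => v ≠ r ∧ H.degree v ≤ 2)

lemma child_bound [Fintype V] {H : SimpleGraph V} [DecidableRel H.Adj] {T : Finset V} {c r : V}
    (hrT : r ∉ T) (hadj : H.Adj c r) {m : ℕ} (hdc : H.degree c ≤ m + 1) :
    (T.filter (fun w => H.Adj c w)).card ≤ m := by
  have hsub : T.filter (fun w => H.Adj c w) ⊆ (H.neighborFinset c).erase r := by
    intro w hw
    rw [Finset.mem_filter] at hw
    rw [Finset.mem_erase, mem_neighborFinset]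
    exact ⟨fun h => hrT (h ▸ hw.1), hw.2⟩
  have h1 := Finset.card_le_card hsub
  rw [Finset.card_erase_of_mem (by rwa [mem_neighborFinset])] at h1
  have h2 : (H.neighborFinset c).card = H.degree c := rfl
  omega

lemma lemR [Fintype V] (H : SimpleGraph V) [DecidableRel H.Adj] (hH : H.IsAcyclic)
    (hdeg : ∀ v, H.degree v ≤ 3) :
    ∀ (n : ℕ) (S : Finset V), S.card ≤ n → ∀ r, r ∈ S →
    (∀ v ∈ S, v ≠ r → ∀ w, H.Adj v w → w ∈ S) →
    ((S.filter (fun w => H.Adj r w)).card ≤ 2) →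
    (∀ v ∈ S, ∃ p : H.Walk v r, ∀ x ∈ p.support, x ∈ S) →
    ∃ L : List (PathSig H),
      2 * L.length + (zset H S r).card % 2 = (zset H S r).card ∧
      GoodList S (zset H S r) L ∧
      ((S.filter (fun w => H.Adj r w)).card ≤ 1 → ∀ p ∈ L, r ∉ p.2.2.support) ∧
      ((zset H S r).card % 2 = 1 →
        ∃ (t : V) (d : H.Walk t r), t ∈ zset H S r ∧ d.IsPath ∧ (∀ x ∈ d.support, x ∈ S) ∧
          ∀ p ∈ L, List.Disjoint d.support p.2.2.support) := by
  classical
  intro n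
  induction n with
  | zero =>
    intro S hS r hr
    rw [Nat.le_zero, Finset.card_eq_zero] at hS
    subst hS
    exact absurd hr (Finset.notMem_empty r)
  | succ n ih =>
    intro S hScard r hr hclosed hch hconn
    rcases (by omega : (S.filter (fun w => H.Adj r w)).card = 0 ∨
        (S.filter (fun w => H.Adj r w)).card = 1 ∨
        (S.filter (fun w => H.Adj r w)).card = 2) with h0 | h1 | h2
    -- CASE 0 children
    · have hz : zset H S r = ∅ := by
        rw [Finset.eq_empty_iff_forall_notMem]
        intro v hv
        rw [zset, Finset.mem_filter] at hv
        obtain ⟨p, hp⟩ := hconn v hv.1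
        obtain ⟨c, q, hadj, hq⟩ := step_to_child hv.2.1 p hp
        have hcS : c ∈ S := (hq c q.end_mem_support).1
        have hmem : c ∈ S.filter (fun w => H.Adj r w) := Finset.mem_filter.mpr ⟨hcS, hadj⟩
        rw [Finset.card_eq_zero.mp h0] at hmem
        exact absurd hmem (Finset.notMem_empty c)
      refine ⟨[], by simp [hz], ⟨by simp, List.Pairwise.nil⟩, by simp, by simp [hz]⟩
    -- CASE 1 child
    · obtain ⟨c, hCc⟩ := Finset.card_eq_one.mp h1
      have hcC : c ∈ S.filter (fun w => H.Adj r w) := hCc ▸ Finset.mem_singleton_self c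
      rw [Finset.mem_filter] at hcC
      obtain ⟨hcS, hrc⟩ := hcC
      have hcr : c ≠ r := hrc.ne'
      set S' := S.erase r with hS'def
      have hrS' : r ∉ S' := Finset.notMem_erase r S
      have hcS' : c ∈ S' := Finset.mem_erase.mpr ⟨hcr, hcS⟩
      have hcardS' : S'.card ≤ n := by
        rw [hS'def, Finset.card_erase_of_mem hr]; omega
      have honlychild : ∀ v ∈ S, H.Adj r v → v = c := by
        intro v hv hadj
        have : v ∈ S.filter (fun w => H.Adj r w) := Finset.mem_filter.mpr ⟨hv, hadj⟩
        rw [hCc, Finset.mem_singleton] at this; exact this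
      have hclosed' : ∀ v ∈ S', v ≠ c → ∀ w, H.Adj v w → w ∈ S' := by
        intro v hv hvc w hadj
        rw [Finset.mem_erase] at hv
        have hwS : w ∈ S := hclosed v hv.2 hv.1 w hadj
        refine Finset.mem_erase.mpr ⟨?_, hwS⟩
        rintro rfl
        exact hvc (honlychild v hv.2 hadj.symm)
      have hch' : (S'.filter (fun w => H.Adj c w)).card ≤ 2 := by
        exact child_bound hrS' hrc.symm (by have := hdeg c; omega)
      have hconn' : ∀ v ∈ S', ∃ p : H.Walk v c, ∀ x ∈ p.support, x ∈ S' := by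
        intro v hv
        rw [Finset.mem_erase] at hv
        obtain ⟨p, hp⟩ := hconn v hv.2
        obtain ⟨c', q, hadj', hq⟩ := step_to_child hv.1 p hp
        have : c' = c := honlychild c' (hq c' q.end_mem_support).1 hadj'
        subst this
        exact ⟨q, fun x hx => Finset.mem_erase.mpr ⟨(hq x hx).2, (hq x hx).1⟩⟩
      obtain ⟨L', hcount', hgood', hA', hB'⟩ := ih S' hcardS' c hcS' hclosed' hch' hconn'
      have hsub : zset H S' c ⊆ zset H S r := by
        intro v hv
        rw [zset, Finset.mem_filter] at hv ⊢
        rw [Finset.mem_erase] at hv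
        exact ⟨hv.1.2, hv.1.1, hv.2.2⟩
      have hsupS' : ∀ p ∈ L', ∀ x ∈ p.2.2.support, x ∈ S' := fun p hp => (hgood'.1 p hp).2.2.2.2
      have hgoodS : GoodList S (zset H S r) L' := by
        refine ⟨fun p hp => ?_, hgood'.2⟩
        obtain ⟨h1', h2', h3', h4', h5'⟩ := hgood'.1 p hp
        exact ⟨h1', hsub h2', hsub h3', h4', fun x hx => Finset.mem_of_mem_erase (h5' x hx)⟩
      have hAout : ∀ p ∈ L', r ∉ p.2.2.support := by
        intro p hp hmem
        exact hrS' (hsupS' p hp r hmem)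
      by_cases hdc : H.degree c ≤ 2
      · -- c is a terminal
        have hczS : c ∈ zset H S r := Finset.mem_filter.mpr ⟨hcS, hcr, hdc⟩
        have hzeq : zset H S r = insert c (zset H S' c) := by
          ext v
          rw [zset, zset, Finset.mem_insert, Finset.mem_filter, Finset.mem_filter,
            Finset.mem_erase]
          constructor
          · rintro ⟨hvS, hvr, hvd⟩
            by_cases hvc : v = c
            · exact Or.inl hvc
            · exact Or.inr ⟨⟨hvr, hvS⟩, hvc, hvd⟩
          · rintro (rfl | ⟨⟨hvr, hvS⟩, _, hvd⟩)
            · exact ⟨hcS, hcr, hdc⟩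
            · exact ⟨hvS, hvr, hvd⟩
        have hznum : (zset H S r).card = (zset H S' c).card + 1 := by
          rw [hzeq, Finset.card_insert_of_notMem]
          intro h
          rw [zset, Finset.mem_filter] at h
          exact h.2.1 rfl
        by_cases hpar : (zset H S' c).card % 2 = 1
        · -- odd: pair dangling with c
          obtain ⟨t, d, ht, hdp, hdS, hddisj⟩ := hB' hpar
          have htc : t ≠ c := by
            rw [zset, Finset.mem_filter] at ht; exact ht.2.1
          refine ⟨⟨t, c, d⟩ :: L', ?_, ⟨?_, ?_⟩, ?_, ?_⟩
          · show 2 * (L'.length + 1) + (zset H S r).card % 2 = (zset H S r).card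
            omega
          · intro p hp
            rcases List.mem_cons.mp hp with rfl | hp
            · exact ⟨hdp, hsub ht, hczS, walk_length_pos_of_ne d htc,
                fun x hx => Finset.mem_of_mem_erase (hdS x hx)⟩
            · exact hgoodS.1 p hp
          · exact List.Pairwise.cons (fun p hp => hddisj p hp) hgood'.2
          · intro _ p hp
            rcases List.mem_cons.mp hp with rfl | hp
            · intro hmem; exact hrS' (hdS r hmem)
            · exact hAout p hp
          · intro habs; omega
        · -- even
          refine ⟨L', by omega, hgoodS, fun _ => hAout, ?_⟩
          intro _
          have hc1 : (S'.filter (fun w => H.Adj c w)).card ≤ 1 :=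
            child_bound hrS' hrc.symm (by omega)
          have hcnot : ∀ p ∈ L', c ∉ p.2.2.support := hA' hc1
          refine ⟨c, Walk.cons hrc.symm Walk.nil, hczS, ?_, ?_, ?_⟩
          · rw [Walk.cons_isPath_iff]
            exact ⟨Walk.IsPath.nil, by simp [hcr]⟩
          · intro x hx
            rw [Walk.support_cons, List.mem_cons] at hx
            rcases hx with rfl | hx
            · exact hcS
            · rw [Walk.support_nil, List.mem_singleton] at hx; subst hx; exact hr
          · intro p hp x hx hx2
            rw [Walk.support_cons, List.mem_cons] at hx
            rcases hx with rfl | hx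
            · exact hcnot p hp hx2
            · rw [Walk.support_nil, List.mem_singleton] at hx; subst hx
              exact hAout p hp hx2
      · -- c not a terminal
        have hzeq : zset H S r = zset H S' c := by
          ext v
          rw [zset, zset, Finset.mem_filter, Finset.mem_filter, Finset.mem_erase]
          constructor
          · rintro ⟨hvS, hvr, hvd⟩
            refine ⟨⟨hvr, hvS⟩, ?_, hvd⟩
            rintro rfl; exact hdc hvd
          · rintro ⟨⟨hvr, hvS⟩, _, hvd⟩
            exact ⟨hvS, hvr, hvd⟩
        rw [hzeq]
        refine ⟨L', hcount', ?_, fun _ => hAout, ?_⟩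
        · rw [hzeq] at hgoodS; exact hgoodS
        · intro hpar
          obtain ⟨t, d, ht, hdp, hdS, hddisj⟩ := hB' hpar
          have hrd : r ∉ d.support := fun h => hrS' (hdS r h)
          obtain ⟨e, hep, hes⟩ := dangling_extend d hdp hrc.symm hrd
          refine ⟨t, e, ht, hep, ?_, ?_⟩
          · intro x hx
            rcases (hes x).mp hx with rfl | hx
            · exact hr
            · exact Finset.mem_of_mem_erase (hdS x hx)
          · intro p hp x hx hx2
            rcases (hes x).mp hx with rfl | hx
            · exact hAout p hp hx2
            · exact hddisj p hp hx hx2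
    -- CASE 2 children
    · obtain ⟨c1, c2, hne, hC12⟩ := Finset.card_eq_two.mp h2
      have hc1C : c1 ∈ S.filter (fun w => H.Adj r w) := by rw [hC12]; simp
      have hc2C : c2 ∈ S.filter (fun w => H.Adj r w) := by rw [hC12]; simp
      rw [Finset.mem_filter] at hc1C hc2C
      obtain ⟨hc1S, hrc1⟩ := hc1C
      obtain ⟨hc2S, hrc2⟩ := hc2C
      set S' := S.erase r with hS'def
      have hrS' : r ∉ S' := Finset.notMem_erase r S
      have hchild : ∀ v ∈ S, H.Adj r v → v = c1 ∨ v = c2 := by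
        intro v hv hadj
        have hmem : v ∈ S.filter (fun w => H.Adj r w) := Finset.mem_filter.mpr ⟨hv, hadj⟩
        rw [hC12, Finset.mem_insert, Finset.mem_singleton] at hmem
        exact hmem
      obtain ⟨Sset, hmemSset⟩ : ∃ f : V → Finset V, ∀ c v, v ∈ f c ↔
          (v ∈ S' ∧ ∃ q : H.Walk v c, ∀ x ∈ q.support, x ∈ S') :=
        ⟨fun c => S'.filter (fun v => ∃ q : H.Walk v c, ∀ x ∈ q.support, x ∈ S'),
          fun c v => Finset.mem_filter⟩
      have hSsub : ∀ c, Sset c ⊆ S' := fun c v hv => ((hmemSset c v).mp hv).1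
      have hcmem : ∀ c, c ∈ S → c ≠ r → c ∈ Sset c := by
        intro c hcS hcr
        refine (hmemSset c c).mpr ⟨Finset.mem_erase.mpr ⟨hcr, hcS⟩, Walk.nil, ?_⟩
        intro x hx
        rw [Walk.support_nil, List.mem_singleton] at hx
        subst hx; exact Finset.mem_erase.mpr ⟨hcr, hcS⟩
      have hdisjS : ∀ ca cb, H.Adj r ca → H.Adj r cb → ca ≠ cb →
          ∀ v, v ∈ Sset ca → v ∈ Sset cb → False := by
        intro ca cb hadja hadjb hnab v hva hvb
        obtain ⟨hvS', qa, hqa⟩ := (hmemSset ca v).mp hva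
        obtain ⟨_, qb, hqb⟩ := (hmemSset cb v).mp hvb
        have hw : ∀ x ∈ (qa.reverse.append qb).support, x ∈ S' := by
          intro x hx
          rw [Walk.support_append, List.mem_append] at hx
          rcases hx with hx | hx
          · rw [Walk.support_reverse, List.mem_reverse] at hx; exact hqa x hx
          · exact hqb x (List.mem_of_mem_tail hx)
        have hP2 : (Walk.cons hadja.symm (Walk.cons hadjb Walk.nil) : H.Walk ca cb).IsPath := by
          rw [Walk.isPath_def]
          simp [Walk.support_cons, hadja.ne', hadjb.ne, hnab]
        have := hH.path_unique ((qa.reverse.append qb).toPath)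
          ⟨Walk.cons hadja.symm (Walk.cons hadjb Walk.nil), hP2⟩
        have hrmem : r ∈ ((qa.reverse.append qb).toPath : H.Walk ca cb).support := by
          rw [this]; simp
        exact hrS' (hw r (Walk.support_toPath_subset _ hrmem))
      have hcover : ∀ v ∈ S', v ∈ Sset c1 ∨ v ∈ Sset c2 := by
        intro v hv
        rw [Finset.mem_erase] at hv
        obtain ⟨p, hp⟩ := hconn v hv.2
        obtain ⟨c, q, hadj', hq⟩ := step_to_child hv.1 p hp
        have hqS' : ∀ x ∈ q.support, x ∈ S' :=
          fun x hx => Finset.mem_erase.mpr ⟨(hq x hx).2, (hq x hx).1⟩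
        rcases hchild c (hq c q.end_mem_support).1 hadj' with rfl | rfl
        · exact Or.inl ((hmemSset _ v).mpr ⟨hqS' v q.start_mem_support, q, hqS'⟩)
        · exact Or.inr ((hmemSset _ v).mpr ⟨hqS' v q.start_mem_support, q, hqS'⟩)
      -- the side construction
      have side : ∀ ca cb, ca ∈ S → H.Adj r ca → H.Adj r cb → ca ≠ cb →
          (∀ v ∈ S, H.Adj r v → v = ca ∨ v = cb) →
          ∃ Lc : List (PathSig H),
            2 * Lc.length + ((Sset ca).filter (fun v => H.degree v ≤ 2)).card % 2
              = ((Sset ca).filter (fun v => H.degree v ≤ 2)).card ∧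
            (∀ p ∈ Lc, p.2.2.IsPath ∧ p.1 ∈ zset H S r ∧ p.2.1 ∈ zset H S r ∧
              1 ≤ p.2.2.length ∧ ∀ x ∈ p.2.2.support, x ∈ Sset ca) ∧
            Lc.Pairwise Disj ∧
            (((Sset ca).filter (fun v => H.degree v ≤ 2)).card % 2 = 1 →
              ∃ (t : V) (d : H.Walk t ca), t ∈ zset H S r ∧ d.IsPath ∧
                (∀ x ∈ d.support, x ∈ Sset ca) ∧
                ∀ p ∈ Lc, List.Disjoint d.support p.2.2.support) := by
        intro ca cb hcaS hadja hadjb hnab hcc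
        have hcar : ca ≠ r := hadja.ne'
        have hcaSset : ca ∈ Sset ca := hcmem ca hcaS hcar
        have hrSset : r ∉ Sset ca := fun h => hrS' (hSsub ca h)
        have hcard : (Sset ca).card ≤ n := by
          have h1' := Finset.card_le_card (hSsub ca)
          rw [hS'def, Finset.card_erase_of_mem hr] at h1'
          omega
        have hclosed'' : ∀ v ∈ Sset ca, v ≠ ca → ∀ w, H.Adj v w → w ∈ Sset ca := by
          intro v hv hvca w hadj
          obtain ⟨hvS', qv, hqv⟩ := (hmemSset ca v).mp hv
          rw [Finset.mem_erase] at hvS'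
          have hwS : w ∈ S := hclosed v hvS'.2 hvS'.1 w hadj
          by_cases hwr : w = r
          · subst hwr
            rcases hcc v hvS'.2 hadj.symm with rfl | rfl
            · exact absurd rfl hvca
            · exact (hdisjS ca v hadja hadj.symm (fun hh => hnab hh) v hv
                (hcmem v hvS'.2 hvS'.1)).elim
          · refine (hmemSset ca w).mpr ⟨Finset.mem_erase.mpr ⟨hwr, hwS⟩,
              Walk.cons hadj.symm qv, ?_⟩
            intro x hx
            rw [Walk.support_cons, List.mem_cons] at hx
            rcases hx with rfl | hx
            · exact Finset.mem_erase.mpr ⟨hwr, hwS⟩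
            · exact hqv x hx
        have hch'' : ((Sset ca).filter (fun w => H.Adj ca w)).card ≤ 2 :=
          child_bound hrSset hadja.symm (by have := hdeg ca; omega)
        have hconn'' : ∀ v ∈ Sset ca, ∃ p : H.Walk v ca, ∀ x ∈ p.support, x ∈ Sset ca := by
          intro v hv
          obtain ⟨hvS', qv, hqv⟩ := (hmemSset ca v).mp hv
          refine ⟨qv, fun x hx => ?_⟩
          refine (hmemSset ca x).mpr ⟨hqv x hx, qv.dropUntil x hx, fun y hy => ?_⟩
          exact hqv y (Walk.support_dropUntil_subset qv hx hy)
        obtain ⟨Lc', hcnt', hgood', hA', hB'⟩ :=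
          ih (Sset ca) hcard ca hcaSset hclosed'' hch'' hconn''
        have hzc_sub : zset H (Sset ca) ca ⊆ zset H S r := by
          intro v hv
          rw [zset, Finset.mem_filter] at hv ⊢
          have hvS' := hSsub ca hv.1
          rw [Finset.mem_erase] at hvS'
          exact ⟨hvS'.2, hvS'.1, hv.2.2⟩
        have hgoodout : ∀ p ∈ Lc', p.2.2.IsPath ∧ p.1 ∈ zset H S r ∧ p.2.1 ∈ zset H S r ∧
            1 ≤ p.2.2.length ∧ ∀ x ∈ p.2.2.support, x ∈ Sset ca := by
          intro p hp
          obtain ⟨hh1, hh2, hh3, hh4, hh5⟩ := hgood'.1 p hp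
          exact ⟨hh1, hzc_sub hh2, hzc_sub hh3, hh4, hh5⟩
        by_cases hdc : H.degree ca ≤ 2
        · have hcazS : ca ∈ zset H S r := Finset.mem_filter.mpr ⟨hcaS, hcar, hdc⟩
          have hYeq : (Sset ca).filter (fun v => H.degree v ≤ 2)
              = insert ca (zset H (Sset ca) ca) := by
            ext v
            rw [Finset.mem_filter, Finset.mem_insert, zset, Finset.mem_filter]
            constructor
            · rintro ⟨hvs, hvd⟩
              by_cases hvc : v = ca
              · exact Or.inl hvc
              · exact Or.inr ⟨hvs, hvc, hvd⟩
            · rintro (rfl | ⟨hvs, _, hvd⟩)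
              · exact ⟨hcaSset, hdc⟩
              · exact ⟨hvs, hvd⟩
          have hYnum : ((Sset ca).filter (fun v => H.degree v ≤ 2)).card
              = (zset H (Sset ca) ca).card + 1 := by
            rw [hYeq, Finset.card_insert_of_notMem]
            intro h
            rw [zset, Finset.mem_filter] at h
            exact h.2.1 rfl
          have hA'' : ∀ p ∈ Lc', ca ∉ p.2.2.support :=
            hA' (child_bound hrSset hadja.symm (by omega))
          by_cases hpar : (zset H (Sset ca) ca).card % 2 = 1
          · obtain ⟨t, d, ht, hdp, hdS, hdd⟩ := hB' hpar
            have htca : t ≠ ca := by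
              rw [zset, Finset.mem_filter] at ht; exact ht.2.1
            refine ⟨⟨t, ca, d⟩ :: Lc', ?_, ?_, ?_, ?_⟩
            · show 2 * (Lc'.length + 1) + ((Sset ca).filter (fun v => H.degree v ≤ 2)).card % 2 =
                ((Sset ca).filter (fun v => H.degree v ≤ 2)).card
              omega
            · intro p hp
              rcases List.mem_cons.mp hp with rfl | hp
              · exact ⟨hdp, hzc_sub ht, hcazS, walk_length_pos_of_ne d htca, hdS⟩
              · exact hgoodout p hp
            · exact List.Pairwise.cons (fun p hp => hdd p hp) hgood'.2
            · intro habs; omega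
          · refine ⟨Lc', by omega, hgoodout, hgood'.2, ?_⟩
            intro _
            refine ⟨ca, Walk.nil, hcazS, Walk.IsPath.nil, ?_, ?_⟩
            · intro x hx
              rw [Walk.support_nil, List.mem_singleton] at hx
              subst hx; exact hcaSset
            · intro p hp x hx hx2
              rw [Walk.support_nil, List.mem_singleton] at hx
              subst hx
              exact hA'' p hp hx2
        · have hYeq : (Sset ca).filter (fun v => H.degree v ≤ 2) = zset H (Sset ca) ca := by
            ext v
            rw [Finset.mem_filter, zset, Finset.mem_filter]
            constructor
            · rintro ⟨hvs, hvd⟩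
              refine ⟨hvs, ?_, hvd⟩
              rintro rfl; exact hdc hvd
            · rintro ⟨hvs, _, hvd⟩; exact ⟨hvs, hvd⟩
          rw [hYeq]
          refine ⟨Lc', hcnt', hgoodout, hgood'.2, ?_⟩
          intro hpar
          obtain ⟨t, d, ht, hdp, hdS, hdd⟩ := hB' hpar
          exact ⟨t, d, hzc_sub ht, hdp, hdS, hdd⟩
      -- apply side to both children
      obtain ⟨L1, hcnt1, hg1, hpw1, hB1⟩ := side c1 c2 hc1S hrc1 hrc2 hne hchild
      obtain ⟨L2, hcnt2, hg2, hpw2, hB2⟩ := side c2 c1 hc2S hrc2 hrc1 hne.symm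
        (fun v hv ha => (hchild v hv ha).symm)
      -- cardinality: zset = Y1 ⊔ Y2
      have hzU : zset H S r =
          ((Sset c1).filter (fun v => H.degree v ≤ 2)) ∪
          ((Sset c2).filter (fun v => H.degree v ≤ 2)) := by
        ext v
        rw [zset, Finset.mem_filter, Finset.mem_union, Finset.mem_filter, Finset.mem_filter]
        constructor
        · rintro ⟨hvS, hvr, hvd⟩
          rcases hcover v (Finset.mem_erase.mpr ⟨hvr, hvS⟩) with hv | hv
          · exact Or.inl ⟨hv, hvd⟩
          · exact Or.inr ⟨hv, hvd⟩
        · rintro (⟨hv, hvd⟩ | ⟨hv, hvd⟩) <;>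
          · have := hSsub _ hv
            rw [Finset.mem_erase] at this
            exact ⟨this.2, this.1, hvd⟩
      have hzsum : (zset H S r).card =
          ((Sset c1).filter (fun v => H.degree v ≤ 2)).card +
          ((Sset c2).filter (fun v => H.degree v ≤ 2)).card := by
        rw [hzU]
        apply Finset.card_union_of_disjoint
        rw [Finset.disjoint_left]
        intro a ha hb
        rw [Finset.mem_filter] at ha hb
        exact hdisjS c1 c2 hrc1 hrc2 hne a ha.1 hb.1
      have hcross : ∀ p ∈ L1, ∀ q ∈ L2, Disj p q := by
        intro p hp q hq x hx hx2
        exact hdisjS c1 c2 hrc1 hrc2 hne x ((hg1 p hp).2.2.2.2 x hx) ((hg2 q hq).2.2.2.2 x hx2)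
      have hsupS : ∀ c, ∀ (L : List (PathSig H)),
          (∀ p ∈ L, ∀ x ∈ p.2.2.support, x ∈ Sset c) →
          ∀ p ∈ L, ∀ x ∈ p.2.2.support, x ∈ S := by
        intro c L hL p hp x hx
        exact Finset.mem_of_mem_erase (hSsub c (hL p hp x hx))
      have hgoodapp : GoodList S (zset H S r) (L1 ++ L2) := by
        constructor
        · intro p hp
          rcases List.mem_append.mp hp with hp | hp
          · obtain ⟨a1, a2, a3, a4, a5⟩ := hg1 p hp
            exact ⟨a1, a2, a3, a4, fun x hx => Finset.mem_of_mem_erase (hSsub c1 (a5 x hx))⟩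
          · obtain ⟨a1, a2, a3, a4, a5⟩ := hg2 p hp
            exact ⟨a1, a2, a3, a4, fun x hx => Finset.mem_of_mem_erase (hSsub c2 (a5 x hx))⟩
        · exact List.pairwise_append.mpr ⟨hpw1, hpw2, fun a ha b hb => hcross a ha b hb⟩
      have hAtriv : (S.filter (fun w => H.Adj r w)).card ≤ 1 → True := fun _ => trivial
      have hrnot1 : ∀ p ∈ L1, r ∉ p.2.2.support :=
        fun p hp hmem => hrS' (hSsub c1 ((hg1 p hp).2.2.2.2 r hmem))
      have hrnot2 : ∀ p ∈ L2, r ∉ p.2.2.support :=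
        fun p hp hmem => hrS' (hSsub c2 ((hg2 p hp).2.2.2.2 r hmem))
      by_cases hp1 : ((Sset c1).filter (fun v => H.degree v ≤ 2)).card % 2 = 1
      · by_cases hp2 : ((Sset c2).filter (fun v => H.degree v ≤ 2)).card % 2 = 1
        · -- both odd: marry
          obtain ⟨t1, d1, ht1, hdp1, hdS1, hdd1⟩ := hB1 hp1
          obtain ⟨t2, d2, ht2, hdp2, hdS2, hdd2⟩ := hB2 hp2
          have hrd1 : r ∉ d1.support := fun h => hrS' (hSsub c1 (hdS1 r h))
          have hrd2 : r ∉ d2.support := fun h => hrS' (hSsub c2 (hdS2 r h))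
          have hd12 : List.Disjoint d1.support d2.support := by
            intro x hx hx2
            exact hdisjS c1 c2 hrc1 hrc2 hne x (hdS1 x hx) (hdS2 x hx2)
          obtain ⟨e, hep, hel, hes⟩ := marry d1 d2 hrc1.symm hrc2 hdp1 hdp2 hrd1 hrd2 hd12
          refine ⟨⟨t1, t2, e⟩ :: (L1 ++ L2), ?_, ⟨?_, ?_⟩, ?_, ?_⟩
          · show 2 * ((L1 ++ L2).length + 1) + (zset H S r).card % 2 = (zset H S r).card
            have : (L1 ++ L2).length = L1.length + L2.length := by simp
            omega
          · intro p hp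
            rcases List.mem_cons.mp hp with rfl | hp
            · refine ⟨hep, ht1, ht2, hel, ?_⟩
              intro x hx
              rcases (hes x).mp hx with hx | rfl | hx
              · exact Finset.mem_of_mem_erase (hSsub c1 (hdS1 x hx))
              · exact hr
              · exact Finset.mem_of_mem_erase (hSsub c2 (hdS2 x hx))
            · exact hgoodapp.1 p hp
          · refine List.Pairwise.cons ?_ hgoodapp.2
            intro p hp x hx hx2
            rcases (hes x).mp hx with hx | rfl | hx
            · rcases List.mem_append.mp hp with hp | hp
              · exact hdd1 p hp hx hx2
              · exact hdisjS c1 c2 hrc1 hrc2 hne x (hdS1 x hx) ((hg2 p hp).2.2.2.2 x hx2)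
            · rcases List.mem_append.mp hp with hp | hp
              · exact hrnot1 p hp hx2
              · exact hrnot2 p hp hx2
            · rcases List.mem_append.mp hp with hp | hp
              · exact hdisjS c2 c1 hrc2 hrc1 hne.symm x (hdS2 x hx) ((hg1 p hp).2.2.2.2 x hx2)
              · exact hdd2 p hp hx hx2
          · intro habs; exact absurd habs (by omega)
          · intro habs; omega
        · -- Y1 odd, Y2 even
          obtain ⟨t1, d1, ht1, hdp1, hdS1, hdd1⟩ := hB1 hp1
          have hrd1 : r ∉ d1.support := fun h => hrS' (hSsub c1 (hdS1 r h))
          obtain ⟨e, hep, hes⟩ := dangling_extend d1 hdp1 hrc1.symm hrd1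
          refine ⟨L1 ++ L2, ?_, hgoodapp, ?_, ?_⟩
          · simp only [List.length_append]; omega
          · intro habs; exact absurd habs (by omega)
          · intro _
            refine ⟨t1, e, ht1, hep, ?_, ?_⟩
            · intro x hx
              rcases (hes x).mp hx with rfl | hx
              · exact hr
              · exact Finset.mem_of_mem_erase (hSsub c1 (hdS1 x hx))
            · intro p hp x hx hx2
              rcases (hes x).mp hx with rfl | hx
              · rcases List.mem_append.mp hp with hp | hp
                · exact hrnot1 p hp hx2
                · exact hrnot2 p hp hx2
              · rcases List.mem_append.mp hp with hp | hp
                · exact hdd1 p hp hx hx2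
                · exact hdisjS c1 c2 hrc1 hrc2 hne x (hdS1 x hx) ((hg2 p hp).2.2.2.2 x hx2)
      · by_cases hp2 : ((Sset c2).filter (fun v => H.degree v ≤ 2)).card % 2 = 1
        · -- Y1 even, Y2 odd
          obtain ⟨t2, d2, ht2, hdp2, hdS2, hdd2⟩ := hB2 hp2
          have hrd2 : r ∉ d2.support := fun h => hrS' (hSsub c2 (hdS2 r h))
          obtain ⟨e, hep, hes⟩ := dangling_extend d2 hdp2 hrc2.symm hrd2
          refine ⟨L1 ++ L2, ?_, hgoodapp, ?_, ?_⟩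
          · simp only [List.length_append]; omega
          · intro habs; exact absurd habs (by omega)
          · intro _
            refine ⟨t2, e, ht2, hep, ?_, ?_⟩
            · intro x hx
              rcases (hes x).mp hx with rfl | hx
              · exact hr
              · exact Finset.mem_of_mem_erase (hSsub c2 (hdS2 x hx))
            · intro p hp x hx hx2
              rcases (hes x).mp hx with rfl | hx
              · rcases List.mem_append.mp hp with hp | hp
                · exact hrnot1 p hp hx2
                · exact hrnot2 p hp hx2
              · rcases List.mem_append.mp hp with hp | hp
                · exact hdisjS c2 c1 hrc2 hrc1 hne.symm x (hdS2 x hx) ((hg1 p hp).2.2.2.2 x hx2)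
                · exact hdd2 p hp hx hx2
        · -- both even
          refine ⟨L1 ++ L2, ?_, hgoodapp, ?_, ?_⟩
          · simp only [List.length_append]; omega
          · intro habs; exact absurd habs (by omega)
          · intro habs; omega


end Stmt11Helpers

open Stmt11Helpers

/-- If a graph `G` contains a subcubic forest `F` as a subgraph such that the set `Z` of
vertices of `F` of degree at most 2 satisfies `Z ⊆ A` and `|Z| ≥ 2k + m − 1`, where `m` is
the number of components of `F`, then `G` contains `k` pairwise vertex-disjoint
`A`-paths. -/
theorem stmt_11 {V : Type*} [Fintype V] (G : SimpleGraph V) (A : Set V)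
    (k : ℕ) (hk : 1 ≤ k)
    (F : G.Subgraph)
    (hForest : F.coe.IsAcyclic)
    (hSubcubic : ∀ v : V, (F.neighborSet v).ncard ≤ 3)
    (Z : Set V) (hZdef : Z = {v ∈ F.verts | (F.neighborSet v).ncard ≤ 2})
    (hZA : Z ⊆ A)
    (m : ℕ) (hm : m = Nat.card F.coe.ConnectedComponent)
    (hZcard : 2 * k + m - 1 ≤ Z.ncard) :
    ∃ P : Fin k → Σ u : V, Σ v : V, G.Walk u v,
      (∀ i, (P i).2.2.IsPath ∧ (P i).1 ∈ A ∧ (P i).2.1 ∈ A ∧ 1 ≤ (P i).2.2.length) ∧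
      (∀ i j, i ≠ j → List.Disjoint (P i).2.2.support (P j).2.2.support) := by
  classical
  letI : DecidableEq V := Classical.decEq V
  letI : DecidableRel F.spanningCoe.Adj := Classical.decRel _
  have hHG : F.spanningCoe ≤ G := F.spanningCoe_le
  have hac : F.spanningCoe.IsAcyclic := spanningCoe_isAcyclic hForest
  have hdegeq : ∀ v, F.spanningCoe.degree v = (F.neighborSet v).ncard :=
    fun v => degree_spanningCoe_eq v
  have hdeg3 : ∀ v, F.spanningCoe.degree v ≤ 3 := fun v => (hdegeq v) ▸ hSubcubic v
  by_cases hvne : F.verts.Nonempty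
  swap
  · exfalso
    rw [Set.not_nonempty_iff_eq_empty] at hvne
    have hie : IsEmpty ↥F.verts := by rw [hvne]; exact Set.isEmpty_coe_sort.mpr rfl
    have hm0 : m = 0 := by
      rw [hm, Nat.card_eq_zero]
      left
      exact ⟨fun K => K.ind (fun v => hie.false v)⟩
    have hZ0 : Z.ncard = 0 := by
      have : Z = ∅ := by
        rw [hZdef]
        ext v
        simp only [Set.mem_setOf_eq, Set.mem_empty_iff_false, iff_false, not_and]
        intro hvF
        exact absurd hvF (by rw [hvne]; exact fun h => h)
      rw [this, Set.ncard_empty]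
    omega
  · -- main case
    letI : Fintype F.coe.ConnectedComponent := Fintype.ofFinite _
    have hneC : Nonempty F.coe.ConnectedComponent :=
      ⟨F.coe.connectedComponentMk ⟨hvne.choose, hvne.choose_spec⟩⟩
    set Zf : Finset V := Z.toFinset with hZfdef
    have hZfmem : ∀ v, v ∈ Zf ↔ v ∈ F.verts ∧ F.spanningCoe.degree v ≤ 2 := by
      intro v
      rw [hZfdef, Set.mem_toFinset, hZdef]
      simp only [Set.mem_setOf_eq, hdegeq v]
    obtain ⟨SK, hmemSK⟩ : ∃ f : F.coe.ConnectedComponent → Finset V,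
        ∀ K v, v ∈ f K ↔ ∃ h : v ∈ F.verts, F.coe.connectedComponentMk ⟨v, h⟩ = K :=
      ⟨fun K => Finset.univ.filter
          (fun v => ∃ h : v ∈ F.verts, F.coe.connectedComponentMk ⟨v, h⟩ = K),
       fun K v => ⟨fun h => (Finset.mem_filter.mp h).2,
         fun h => Finset.mem_filter.mpr ⟨Finset.mem_univ v, h⟩⟩⟩
    have hSKdisj : ∀ K1 K2 v, v ∈ SK K1 → v ∈ SK K2 → K1 = K2 := by
      intro K1 K2 v h1 h2
      obtain ⟨hv1, he1⟩ := (hmemSK K1 v).mp h1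
      obtain ⟨hv2, he2⟩ := (hmemSK K2 v).mp h2
      rw [← he1, ← he2]
    have hKmain : ∀ K, ∃ LK : List (PathSig F.spanningCoe),
        (Zf ∩ SK K).card ≤ 2 * LK.length + 1 ∧
        (∀ p ∈ LK, p.2.2.IsPath ∧ p.1 ∈ Zf ∧ p.2.1 ∈ Zf ∧ 1 ≤ p.2.2.length ∧
          ∀ x ∈ p.2.2.support, x ∈ SK K) ∧
        LK.Pairwise Disj := by
      intro K
      rcases Finset.eq_empty_or_nonempty (Zf ∩ SK K) with hemp | ⟨r, hrmem⟩
      · exact ⟨[], by rw [hemp]; simp, by simp, List.Pairwise.nil⟩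
      · have hrZf : r ∈ Zf := Finset.mem_of_mem_inter_left hrmem
        have hrSK : r ∈ SK K := Finset.mem_of_mem_inter_right hrmem
        obtain ⟨hrF, hrdeg⟩ := (hZfmem r).mp hrZf
        have hclosedK : ∀ v ∈ SK K, v ≠ r → ∀ w, F.spanningCoe.Adj v w → w ∈ SK K := by
          intro v hv _ w hadj
          obtain ⟨hvF, hvmk⟩ := (hmemSK K v).mp hv
          have hadj' : F.Adj v w := hadj
          have hwF : w ∈ F.verts := F.edge_vert (F.adj_symm hadj')
          refine (hmemSK K w).mpr ⟨hwF, ?_⟩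
          rw [← hvmk]
          exact ConnectedComponent.sound (Adj.reachable (by exact (F.adj_symm hadj') :
            F.coe.Adj ⟨w, hwF⟩ ⟨v, hvF⟩))
        have hchK : ((SK K).filter (fun w => F.spanningCoe.Adj r w)).card ≤ 2 := by
          have hsub : (SK K).filter (fun w => F.spanningCoe.Adj r w) ⊆
              F.spanningCoe.neighborFinset r := by
            intro w hw
            rw [mem_neighborFinset]
            exact (Finset.mem_filter.mp hw).2
          have h1 := Finset.card_le_card hsub
          have h2 : (F.spanningCoe.neighborFinset r).card = F.spanningCoe.degree r := rfl
          omega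
        have hconnK : ∀ v ∈ SK K, ∃ p : F.spanningCoe.Walk v r,
            ∀ x ∈ p.support, x ∈ SK K := by
          intro v hv
          obtain ⟨hvF, hvmk⟩ := (hmemSK K v).mp hv
          obtain ⟨hrF', hrmk⟩ := (hmemSK K r).mp hrSK
          have hreach : F.coe.Reachable ⟨v, hvF⟩ ⟨r, hrF'⟩ :=
            ConnectedComponent.exact (hvmk.trans hrmk.symm)
          obtain ⟨q⟩ := hreach
          refine ⟨q.map (homCoe F), ?_⟩
          intro x hx
          replace hx : x ∈ (q.map (homCoe F)).support := hx
          rw [Walk.support_map, List.mem_map] at hx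
          obtain ⟨y, hy, rfl⟩ := hx
          refine (hmemSK K _).mpr ⟨y.2, ?_⟩
          have hreach2 : F.coe.Reachable y ⟨r, hrF'⟩ := ⟨q.dropUntil y hy⟩
          rw [← hrmk]
          exact ConnectedComponent.sound hreach2
        obtain ⟨L0, hcount, hgood, _, hB⟩ := lemR F.spanningCoe hac hdeg3 (Fintype.card V)
          (SK K) (by rw [← Finset.card_univ]; exact Finset.card_le_univ _) r hrSK
          hclosedK hchK hconnK
        have hzs : zset F.spanningCoe (SK K) r = (Zf ∩ SK K).erase r := by
          ext v
          rw [zset, Finset.mem_filter, Finset.mem_erase, Finset.mem_inter, hZfmem]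
          constructor
          · rintro ⟨hvS, hvr, hvd⟩
            exact ⟨hvr, ⟨((hmemSK K v).mp hvS).1, hvd⟩, hvS⟩
          · rintro ⟨hvr, ⟨_, hvd⟩, hvS⟩
            exact ⟨hvS, hvr, hvd⟩
        have hzscard : (zset F.spanningCoe (SK K) r).card + 1 = (Zf ∩ SK K).card := by
          rw [hzs, Finset.card_erase_of_mem hrmem]
          have : 1 ≤ (Zf ∩ SK K).card := Finset.card_pos.mpr ⟨r, hrmem⟩
          omega
        have hzsubZf : zset F.spanningCoe (SK K) r ⊆ Zf := by
          intro v hv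
          rw [hzs] at hv
          exact Finset.mem_of_mem_inter_left (Finset.mem_of_mem_erase hv)
        have hgoodout : ∀ p ∈ L0, p.2.2.IsPath ∧ p.1 ∈ Zf ∧ p.2.1 ∈ Zf ∧ 1 ≤ p.2.2.length ∧
            ∀ x ∈ p.2.2.support, x ∈ SK K := by
          intro p hp
          obtain ⟨a1, a2, a3, a4, a5⟩ := hgood.1 p hp
          exact ⟨a1, hzsubZf a2, hzsubZf a3, a4, a5⟩
        by_cases hodd : (zset F.spanningCoe (SK K) r).card % 2 = 1
        · obtain ⟨t, d, ht, hdp, hdS, hdd⟩ := hB hodd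
          have htr : t ≠ r := by
            rw [zset, Finset.mem_filter] at ht
            exact ht.2.1
          refine ⟨⟨t, r, d⟩ :: L0, ?_, ?_, ?_⟩
          · show (Zf ∩ SK K).card ≤ 2 * (L0.length + 1) + 1
            omega
          · intro p hp
            rcases List.mem_cons.mp hp with rfl | hp
            · exact ⟨hdp, hzsubZf ht, hrZf, walk_length_pos_of_ne d htr, hdS⟩
            · exact hgoodout p hp
          · exact List.Pairwise.cons (fun p hp => hdd p hp) hgood.2
        · exact ⟨L0, by omega, hgoodout, hgood.2⟩
    choose LK hLK using hKmain
    set Lall : List (PathSig F.spanningCoe) :=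
      (Finset.univ.toList.map LK).flatten with hLalldef
    -- counting
    have hlen : Lall.length = ∑ K, (LK K).length := by
      rw [hLalldef, List.length_flatten, List.map_map]
      exact Finset.sum_map_toList Finset.univ (fun K => (LK K).length)
    have hfib : Zf.card = ∑ K, (Zf ∩ SK K).card := by
      have := Finset.card_eq_sum_card_fiberwise (f := fun v =>
          if h : v ∈ F.verts then F.coe.connectedComponentMk ⟨v, h⟩ else Classical.arbitrary _)
        (s := Zf) (t := Finset.univ) (fun x _ => Finset.mem_univ _)
      rw [this]
      apply Finset.sum_congr rfl
      intro K _
      congr 1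
      ext v
      rw [Finset.mem_filter, Finset.mem_inter, hmemSK]
      constructor
      · rintro ⟨hvZ, hveq⟩
        have hvF : v ∈ F.verts := ((hZfmem v).mp hvZ).1
        rw [dif_pos hvF] at hveq
        exact ⟨hvZ, hvF, hveq⟩
      · rintro ⟨hvZ, hvF, hveq⟩
        refine ⟨hvZ, ?_⟩
        rw [dif_pos hvF]
        exact hveq
    have hmcard : m = Fintype.card F.coe.ConnectedComponent := by
      rw [hm, Nat.card_eq_fintype_card]
    have hsumineq : Zf.card ≤ 2 * Lall.length + m := by
      rw [hfib, hlen, hmcard, ← Finset.card_univ]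
      calc ∑ K, (Zf ∩ SK K).card ≤ ∑ K, (2 * (LK K).length + 1) :=
            Finset.sum_le_sum (fun K _ => (hLK K).1)
        _ = 2 * (∑ K, (LK K).length) + Finset.univ.card := by
            rw [Finset.sum_add_distrib, Finset.sum_const, Finset.mul_sum, smul_eq_mul, mul_one]
    have hkLall : k ≤ Lall.length := by
      have hzZf : Z.ncard = Zf.card := Set.ncard_eq_toFinset_card' Z
      omega
    -- membership facts for Lall
    have hmemLall : ∀ p ∈ Lall, p.2.2.IsPath ∧ p.1 ∈ Zf ∧ p.2.1 ∈ Zf ∧ 1 ≤ p.2.2.length := by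
      intro p hp
      rw [hLalldef, List.mem_flatten] at hp
      obtain ⟨l, hl, hpl⟩ := hp
      rw [List.mem_map] at hl
      obtain ⟨K, _, rfl⟩ := hl
      obtain ⟨a1, a2, a3, a4, _⟩ := (hLK K).2.1 p hpl
      exact ⟨a1, a2, a3, a4⟩
    have hpwLall : Lall.Pairwise Disj := by
      rw [hLalldef]
      rw [List.pairwise_flatten]
      constructor
      · intro l hl
        rw [List.mem_map] at hl
        obtain ⟨K, _, rfl⟩ := hl
        exact (hLK K).2.2
      · refine List.Pairwise.map _ ?_ ?_ (l := Finset.univ.toList)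
          (R := fun K1 K2 => K1 ≠ K2)
        · intro K1 K2 hne x hx y hy
          intro a ha hb
          have h1 : a ∈ SK K1 := ((hLK K1).2.1 x hx).2.2.2.2 a ha
          have h2 : a ∈ SK K2 := ((hLK K2).2.1 y hy).2.2.2.2 a hb
          exact hne (hSKdisj K1 K2 a h1 h2)
        · exact Finset.nodup_toList _
    -- final construction
    have hsupmap : ∀ (u v : V) (p : F.spanningCoe.Walk u v),
        (p.mapLe hHG).support = p.support := by
      intro u v p
      have hid : ⇑(SimpleGraph.Hom.ofLE hHG) = id := rfl
      show (p.map (SimpleGraph.Hom.ofLE hHG)).support = p.support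
      rw [Walk.support_map, hid, List.map_id]
    refine ⟨fun i => ⟨(Lall.get ⟨i, lt_of_lt_of_le i.isLt hkLall⟩).1,
      (Lall.get ⟨i, lt_of_lt_of_le i.isLt hkLall⟩).2.1,
      (Lall.get ⟨i, lt_of_lt_of_le i.isLt hkLall⟩).2.2.mapLe hHG⟩, ?_, ?_⟩
    · intro i
      dsimp only
      have hmem : Lall.get ⟨(i : ℕ), lt_of_lt_of_le i.isLt hkLall⟩ ∈ Lall :=
        List.get_mem _ _
      obtain ⟨a1, a2, a3, a4⟩ := hmemLall _ hmem
      refine ⟨(Walk.mapLe_isPath hHG).mpr a1, ?_, ?_, ?_⟩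
      · exact hZA (Set.mem_toFinset.mp a2)
      · exact hZA (Set.mem_toFinset.mp a3)
      · have hL : ((Lall.get ⟨(i : ℕ), lt_of_lt_of_le i.isLt hkLall⟩).2.2.mapLe hHG).length
            = (Lall.get ⟨(i : ℕ), lt_of_lt_of_le i.isLt hkLall⟩).2.2.length :=
          Walk.length_map _ _
        exact le_of_le_of_eq a4 hL.symm
    · intro i j hij
      dsimp only
      simp only [hsupmap]
      have hne' : (i : ℕ) ≠ (j : ℕ) := fun h => hij (Fin.ext h)
      have hpg := List.pairwise_iff_getElem.mp hpwLall
      rcases Nat.lt_or_ge (i : ℕ) (j : ℕ) with hlt | hge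
      · exact hpg i j (lt_of_lt_of_le i.isLt hkLall) (lt_of_lt_of_le j.isLt hkLall) hlt
      · have hlt : (j : ℕ) < (i : ℕ) := by omega
        have hd := hpg j i (lt_of_lt_of_le j.isLt hkLall) (lt_of_lt_of_le i.isLt hkLall) hlt
        exact fun a ha hb => hd hb ha
end
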